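/- Let A be a vector space over a field k of characteristic 0 with four binary operations ◁, ▷, ⋄, ≻, and let P = k[∂] ⊗ A be the free k[∂]-module. Define on generators a∘_λ b := ∂(b◁a) + λ(a▷b + b◁a) + a⋄b and a≻_λ b := a≻b. Then (P, ∘_λ, ≻_λ) is a pre-Poisson conformal algebra if and only if (A, ◁, ▷, ≻, ⋄) is a pre-Poisson-Gel'fand-Dorfman algebra. -/

import Mathlib

noncomputable section

/-! ## A framework for conformal algebras.

A `k[∂]`-module is encoded as a `k`-module `P` with an endomorphism `D` (the
action of `∂`).  A `λ`-product is encoded by its family of coefficients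
`m : ℕ → P → P → P`, so that `a_λ b = ∑ λⁿ (m n a b)`; `cev m T a b`
evaluates this family at `λ := T` for an operator `T` (e.g. `T = λ•1`, or
`T = -λ•1 - D` for the substitution `λ ↦ -λ-∂`).  Since `k` has
characteristic zero (hence is infinite), identities of polynomials in
`λ, μ` are equivalent to their evaluated versions at all scalars. -/

variable {k : Type*} [Field k]

/-- The scalar operator `c • id`. -/
def sc {P : Type*} [AddCommGroup P] [Module k P] (c : k) : Module.End k P := c • 1

/-- Evaluation of a coefficient family at the operator `T`:
`cev m T a b = ∑ Tⁿ (m n a b)`. -/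
noncomputable def cev {P V W : Type*} [AddCommGroup W] [Module k W]
    (m : ℕ → P → V → W) (T : Module.End k W) (a : P) (v : V) : W :=
  ∑ᶠ n, (T ^ n) (m n a v)

/-- The coefficient family is `k`-bilinear. -/
def BilinMap (k : Type*) {A B C : Type*} [Field k] [AddCommGroup A] [Module k A]
    [AddCommGroup B] [Module k B] [AddCommGroup C] [Module k C]
    (m : ℕ → A → B → C) : Prop :=
  ∀ (n : ℕ) (a a' : A) (b b' : B) (r : k),
    m n (a + a') b = m n a b + m n a' b ∧ m n (r • a) b = r • m n a b ∧
    m n a (b + b') = m n a b + m n a b' ∧ m n a (r • b) = r • m n a b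

/-- Each `λ`-product takes values in polynomials in `λ`. -/
def FinSuppFam {A B C : Type*} [Zero C] (m : ℕ → A → B → C) : Prop :=
  ∀ a b, (Function.support fun n => m n a b).Finite

/-- The conformal sesquilinearity axioms:
`(∂a)_λ v = −λ a_λ v` and `a_λ (∂v) = (∂+λ) (a_λ v)`. -/
def ConfSesq {P V : Type*} [AddCommGroup P] [Module k P] [AddCommGroup V] [Module k V]
    (DP : Module.End k P) (DV : Module.End k V) (m : ℕ → P → V → V) : Prop :=
  ∀ (lam : k) (a : P) (v : V),
    cev m (sc lam) (DP a) v = (-lam) • cev m (sc lam) a v ∧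
    cev m (sc lam) a (DV v) = DV (cev m (sc lam) a v) + lam • cev m (sc lam) a v

/-- `(P, D, m)` is a Lie conformal algebra. -/
def IsLieConf {P : Type*} [AddCommGroup P] [Module k P]
    (D : Module.End k P) (m : ℕ → P → P → P) : Prop :=
  BilinMap k m ∧ FinSuppFam m ∧ ConfSesq D D m ∧
  (∀ (lam : k) (a b : P), cev m (sc lam) a b = - cev m (-(sc lam) - D) b a) ∧
  (∀ (lam mu : k) (a b c : P),
    cev m (sc lam) a (cev m (sc mu) b c) =
      cev m (sc (lam + mu)) (cev m (sc lam) a b) c + cev m (sc mu) b (cev m (sc lam) a c))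

/-- `(P, D, m)` is a commutative associative conformal algebra. -/
def IsCommAssocConf {P : Type*} [AddCommGroup P] [Module k P]
    (D : Module.End k P) (m : ℕ → P → P → P) : Prop :=
  BilinMap k m ∧ FinSuppFam m ∧ ConfSesq D D m ∧
  (∀ (lam : k) (a b : P), cev m (sc lam) a b = cev m (-(sc lam) - D) b a) ∧
  (∀ (lam mu : k) (a b c : P),
    cev m (sc (lam + mu)) (cev m (sc lam) a b) c = cev m (sc lam) a (cev m (sc mu) b c))

/-- `(P, D, br, mul)` is a Poisson conformal algebra. -/
def IsPoissonConf {P : Type*} [AddCommGroup P] [Module k P]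
    (D : Module.End k P) (br mul : ℕ → P → P → P) : Prop :=
  IsLieConf D br ∧ IsCommAssocConf D mul ∧
  (∀ (lam mu : k) (a b c : P),
    cev br (sc lam) a (cev mul (sc mu) b c) =
      cev mul (sc (lam + mu)) (cev br (sc lam) a b) c +
      cev mul (sc mu) b (cev br (sc lam) a c))

end
noncomputable section
variable {k : Type*} [Field k]

/-- `(P, D, m)` is a left-symmetric conformal algebra. -/
def IsLSymConf {P : Type*} [AddCommGroup P] [Module k P]
    (D : Module.End k P) (m : ℕ → P → P → P) : Prop :=
  BilinMap k m ∧ FinSuppFam m ∧ ConfSesq D D m ∧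
  (∀ (lam mu : k) (a b c : P),
    cev m (sc lam) a (cev m (sc mu) b c) - cev m (sc (lam + mu)) (cev m (sc lam) a b) c =
      cev m (sc mu) b (cev m (sc lam) a c) - cev m (sc (lam + mu)) (cev m (sc mu) b a) c)

/-- `(P, D, m)` is a Zinbiel conformal algebra. -/
def IsZinbielConf {P : Type*} [AddCommGroup P] [Module k P]
    (D : Module.End k P) (m : ℕ → P → P → P) : Prop :=
  BilinMap k m ∧ FinSuppFam m ∧ ConfSesq D D m ∧
  (∀ (lam mu : k) (a b c : P),
    cev m (sc lam) a (cev m (sc mu) b c) =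
      cev m (sc (lam + mu)) (cev m (sc lam) a b + cev m (-(sc lam) - D) b a) c)

/-- `(P, D, circ, succ)` is a pre-Poisson conformal algebra. -/
def IsPrePoissonConf {P : Type*} [AddCommGroup P] [Module k P]
    (D : Module.End k P) (circ succ : ℕ → P → P → P) : Prop :=
  IsLSymConf D circ ∧ IsZinbielConf D succ ∧
  (∀ (lam mu : k) (a b c : P),
    cev succ (sc (lam + mu)) (cev circ (sc lam) a b - cev circ (-(sc lam) - D) b a) c =
      cev circ (sc lam) a (cev succ (sc mu) b c) - cev succ (sc mu) b (cev circ (sc lam) a c)) ∧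
  (∀ (lam mu : k) (a b c : P),
    cev circ (sc (lam + mu)) (cev succ (sc lam) a b + cev succ (-(sc lam) - D) b a) c =
      cev succ (sc lam) a (cev circ (sc mu) b c) + cev succ (sc mu) b (cev circ (sc lam) a c))

end
noncomputable section
variable {k : Type*} [Field k]

/-- `(A, circ)` is a Novikov algebra. -/
def IsNovikovAlg {A : Type*} [AddCommGroup A] [Module k A]
    (circ : A →ₗ[k] A →ₗ[k] A) : Prop :=
  (∀ a b c : A, circ (circ a b) c - circ a (circ b c)
    = circ (circ b a) c - circ b (circ a c)) ∧
  (∀ a b c : A, circ (circ a b) c = circ (circ a c) b)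

/-- `(A, br)` is a Lie algebra. -/
def IsLieAlgBr {A : Type*} [AddCommGroup A] [Module k A]
    (br : A →ₗ[k] A →ₗ[k] A) : Prop :=
  (∀ a b : A, br a b = - br b a) ∧
  (∀ a b c : A, br (br a b) c + br (br b c) a + br (br c a) b = 0)

/-- `(A, m)` is a commutative associative algebra. -/
def IsCommAssocAlg {A : Type*} [AddCommGroup A] [Module k A]
    (m : A →ₗ[k] A →ₗ[k] A) : Prop :=
  (∀ a b : A, m a b = m b a) ∧ (∀ a b c : A, m (m a b) c = m a (m b c))

/-- `(A, circ, br)` is a Gel'fand-Dorfman algebra. -/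
def IsGDAlg {A : Type*} [AddCommGroup A] [Module k A]
    (circ br : A →ₗ[k] A →ₗ[k] A) : Prop :=
  IsNovikovAlg circ ∧ IsLieAlgBr br ∧
  ∀ a b c : A, br (circ a b) c - br (circ a c) b + circ (br a b) c
    - circ (br a c) b - circ a (br b c) = 0

/-- `(A, m, br)` is a Poisson algebra. -/
def IsPoissonAlg {A : Type*} [AddCommGroup A] [Module k A]
    (m br : A →ₗ[k] A →ₗ[k] A) : Prop :=
  IsCommAssocAlg m ∧ IsLieAlgBr br ∧
  ∀ a b c : A, br a (m b c) = m (br a b) c + m b (br a c)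

/-- `(A, circ, m)` is a differential Novikov-Poisson algebra. -/
def IsDNPAlg {A : Type*} [AddCommGroup A] [Module k A]
    (circ m : A →ₗ[k] A →ₗ[k] A) : Prop :=
  IsNovikovAlg circ ∧ IsCommAssocAlg m ∧
  (∀ a b c : A, circ (m a b) c = m a (circ b c)) ∧
  (∀ a b c : A, circ a (m b c) = m (circ a b) c + m b (circ a c))

/-- `(A, circ, m, br)` is a Poisson-Gel'fand-Dorfman algebra. -/
def IsPGDAlg {A : Type*} [AddCommGroup A] [Module k A]
    (circ m br : A →ₗ[k] A →ₗ[k] A) : Prop :=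
  IsGDAlg circ br ∧ IsPoissonAlg m br ∧ IsDNPAlg circ m

/-- The embedding `A → k[∂] ⊗ A` of the generators of the free `k[∂]`-module
on `A`, realized as `ℕ →₀ A`. -/
def emb (k : Type*) [Field k] (A : Type*) [AddCommGroup A] [Module k A] :
    A →ₗ[k] ℕ →₀ A := Finsupp.lsingle 0

/-- The action of `∂` on the free `k[∂]`-module `k[∂] ⊗ A ≅ ℕ →₀ A`. -/
def shft (k : Type*) [Field k] (A : Type*) [AddCommGroup A] [Module k A] :
    Module.End k (ℕ →₀ A) := Finsupp.lmapDomain A k Nat.succ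

end
noncomputable section
variable {k : Type*} [Field k]

/-- `(A, lhd, rhd)` is a pre-Novikov algebra. -/
def IsPreNovikovAlg {A : Type*} [AddCommGroup A] [Module k A]
    (lhd rhd : A →ₗ[k] A →ₗ[k] A) : Prop :=
  (∀ a b c : A, rhd a (rhd b c)
    = rhd (rhd a b + lhd a b) c + rhd b (rhd a c) - rhd (rhd b a + lhd b a) c) ∧
  (∀ a b c : A, rhd a (lhd b c)
    = lhd (rhd a b) c + lhd b (lhd a c + rhd a c) - lhd (lhd b a) c) ∧
  (∀ a b c : A, rhd (lhd a b + rhd a b) c = lhd (rhd a c) b) ∧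
  (∀ a b c : A, lhd (lhd a b) c = lhd (lhd a c) b)

/-- `(A, succ)` is a Zinbiel algebra. -/
def IsZinbielAlg {A : Type*} [AddCommGroup A] [Module k A]
    (succ : A →ₗ[k] A →ₗ[k] A) : Prop :=
  ∀ a b c : A, succ a (succ b c) = succ (succ b a + succ a b) c

/-- `(A, dia)` is a left-symmetric algebra. -/
def IsLSymAlg {A : Type*} [AddCommGroup A] [Module k A]
    (dia : A →ₗ[k] A →ₗ[k] A) : Prop :=
  ∀ a b c : A, dia (dia a b) c - dia a (dia b c) = dia (dia b a) c - dia b (dia a c)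

/-- `(A, lhd, rhd, succ, dia)` is a pre-Poisson-Gel'fand-Dorfman algebra. -/
def IsPrePGDAlg {A : Type*} [AddCommGroup A] [Module k A]
    (lhd rhd succ dia : A →ₗ[k] A →ₗ[k] A) : Prop :=
  IsPreNovikovAlg lhd rhd ∧ IsZinbielAlg succ ∧ IsLSymAlg dia ∧
  -- pre-differential Novikov-Poisson compatibilities:
  (∀ a b c : A, rhd (succ a b + succ b a) c = succ a (rhd b c)) ∧
  (∀ a b c : A, lhd (succ a c) b = succ a (lhd c b)) ∧
  (∀ a b c : A, succ a (lhd c b) = succ (lhd a b + rhd a b) c) ∧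
  (∀ a b c : A, rhd a (succ b c) = succ (lhd a b + rhd a b) c + succ b (rhd a c)) ∧
  (∀ a b c : A, lhd c (succ a b + succ b a) = succ b (lhd c a) + succ a (lhd c b)) ∧
  -- pre-Gel'fand-Dorfman compatibilities:
  (∀ a b c : A, lhd c (dia a b - dia b a) - dia a (lhd c b) - lhd (dia b c) a
    = - dia b (lhd c a) - lhd (dia a c) b) ∧
  (∀ a b c : A, rhd (dia a b - dia b a) c + dia (lhd a b + rhd a b) c
    = rhd a (dia b c) - dia b (rhd a c) + lhd (dia a c) b) ∧
  -- pre-Poisson compatibilities: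
  (∀ a b c : A, succ (dia a b - dia b a) c = dia a (succ b c) - succ b (dia a c)) ∧
  (∀ a b c : A, dia (succ a b + succ b a) c = succ a (dia b c) + succ b (dia a c))

end

noncomputable section
variable {k : Type*} [Field k]
namespace Stmt14Aux
open Function

variable {P : Type*} [AddCommGroup P] [Module k P]

lemma sc_apply (c : k) (v : P) : sc (k := k) c v = c • v := by
  simp [sc]

lemma sc_pow_apply (c : k) (n : ℕ) (v : P) : ((sc (k := k) c) ^ n) v = c ^ n • v := by
  induction n with
  | zero => simp
  | succ n ih => rw [pow_succ, Module.End.mul_apply, sc_apply, map_smul, ih, smul_smul, pow_succ, mul_comm]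

lemma cev_sc (m : ℕ → P → P → P) (t : k) (a v : P) :
    cev m (sc t) a v = ∑ᶠ n, t ^ n • m n a v := by
  unfold cev; exact finsum_congr fun n => sc_pow_apply t n _

lemma supp_fin {m : ℕ → P → P → P} (hF : ∀ a b, (support fun n => m n a b).Finite)
    (T : Module.End k P) (a v : P) :
    (support fun n => (T ^ n) (m n a v)).Finite :=
  (hF a v).subset (fun n hn => by
    simp only [mem_support] at hn ⊢
    intro h; exact hn (by rw [h, map_zero]))


section
variable {m : ℕ → P → P → P}
  (hB : ∀ (n : ℕ) (a a' b b' : P) (r : k),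
    m n (a + a') b = m n a b + m n a' b ∧ m n (r • a) b = r • m n a b ∧
    m n a (b + b') = m n a b + m n a b' ∧ m n a (r • b) = r • m n a b)
  (hF : ∀ a b, (support fun n => m n a b).Finite)

include hB hF

lemma cev_add_left (T : Module.End k P) (a a' v : P) :
    cev m T (a + a') v = cev m T a v + cev m T a' v := by
  unfold cev
  rw [← finsum_add_distrib (supp_fin hF T a v) (supp_fin hF T a' v)]
  exact finsum_congr fun n => by rw [(hB n a a' v v 1).1, map_add]

lemma cev_smul_left (T : Module.End k P) (r : k) (a v : P) :
    cev m T (r • a) v = r • cev m T a v := by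
  unfold cev
  rw [smul_finsum' r (supp_fin hF T a v)]
  exact finsum_congr fun n => by rw [(hB n a a v v r).2.1, map_smul]

lemma cev_zero_left (T : Module.End k P) (v : P) : cev m T 0 v = 0 := by
  have := cev_smul_left hB hF T (0 : k) 0 v
  rwa [zero_smul, zero_smul] at this

lemma cev_neg_left (T : Module.End k P) (a v : P) : cev m T (-a) v = - cev m T a v := by
  have := cev_smul_left hB hF T (-1 : k) a v
  rwa [neg_one_smul, neg_one_smul] at this

lemma cev_sub_left (T : Module.End k P) (a a' v : P) :
    cev m T (a - a') v = cev m T a v - cev m T a' v := by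
  rw [sub_eq_add_neg, cev_add_left hB hF, cev_neg_left hB hF, ← sub_eq_add_neg]

lemma cev_add_right (T : Module.End k P) (a v v' : P) :
    cev m T a (v + v') = cev m T a v + cev m T a v' := by
  unfold cev
  rw [← finsum_add_distrib (supp_fin hF T a v) (supp_fin hF T a v')]
  exact finsum_congr fun n => by rw [(hB n a a v v' 1).2.2.1, map_add]

lemma cev_smul_right (T : Module.End k P) (r : k) (a v : P) :
    cev m T a (r • v) = r • cev m T a v := by
  unfold cev
  rw [smul_finsum' r (supp_fin hF T a v)]
  exact finsum_congr fun n => by rw [(hB n a a v v r).2.2.2, map_smul]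

lemma cev_zero_right (T : Module.End k P) (a : P) : cev m T a 0 = 0 := by
  have := cev_smul_right hB hF T (0 : k) a 0
  rwa [zero_smul, zero_smul] at this

lemma cev_neg_right (T : Module.End k P) (a v : P) : cev m T a (-v) = - cev m T a v := by
  have := cev_smul_right hB hF T (-1 : k) a v
  rwa [neg_one_smul, neg_one_smul] at this

lemma cev_sub_right (T : Module.End k P) (a v v' : P) :
    cev m T a (v - v') = cev m T a v - cev m T a v' := by
  rw [sub_eq_add_neg, cev_add_right hB hF, cev_neg_right hB hF, ← sub_eq_add_neg]

end


section PolyExt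
variable {V : Type*} [AddCommGroup V] [Module k V]

lemma poly_ext [Infinite k] (c : ℕ → V) (hfin : (support c).Finite)
    (h : ∀ t : k, ∑ᶠ n, t ^ n • c n = 0) : ∀ n, c n = 0 := by
  intro n0
  by_cases hn0 : n0 ∈ hfin.toFinset
  swap
  · simpa [Set.Finite.mem_toFinset, mem_support, not_not] using hn0
  rw [← Module.forall_dual_apply_eq_zero_iff k]
  intro phi
  set p : Polynomial k := ∑ n ∈ hfin.toFinset, Polynomial.C (phi (c n)) * Polynomial.X ^ n with hp
  have h1 : ∀ t : k, ∑ᶠ n, t ^ n • c n = ∑ n ∈ hfin.toFinset, t ^ n • c n := fun t =>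
    finsum_eq_finset_sum_of_support_subset _ (by
      intro n hn
      simp only [mem_support] at hn
      simp only [Finset.coe_sort_coe, Set.Finite.coe_toFinset, mem_support]
      intro hc; exact hn (by rw [hc, smul_zero]))
  have hev : ∀ t : k, p.eval t = 0 := by
    intro t
    have h2 := congrArg phi ((h1 t).symm.trans (h t))
    rw [map_sum, map_zero] at h2
    rw [hp, Polynomial.eval_finset_sum, ← h2]
    refine Finset.sum_congr rfl fun n _ => ?_
    rw [Polynomial.eval_mul, Polynomial.eval_C, Polynomial.eval_pow, Polynomial.eval_X,
      map_smul, smul_eq_mul, mul_comm]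
  have hp0 : p = 0 := Polynomial.funext (by simpa using hev)
  have hco : p.coeff n0 = phi (c n0) := by
    rw [hp, Polynomial.finset_sum_coeff]
    rw [Finset.sum_eq_single n0]
    · simp
    · intro b _ hb
      simp [Polynomial.coeff_C_mul, Polynomial.coeff_X_pow, Ne.symm hb]
    · intro hab; exact absurd hn0 hab
  rw [hp0] at hco
  simpa using hco.symm

lemma poly_ext_affine [Infinite k] (c : ℕ → V) (hfin : (support c).Finite) (v0 v1 : V)
    (h : ∀ t : k, ∑ᶠ n, t ^ n • c n = v0 + t • v1) :
    c 0 = v0 ∧ c 1 = v1 ∧ ∀ n, c (n + 2) = 0 := by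
  set g : ℕ → V := fun n => if n = 0 then v0 else if n = 1 then v1 else 0 with hg
  set d : ℕ → V := fun n => c n - g n with hd
  have hgfin : (support g).Finite := Set.Finite.subset ((Set.finite_singleton 1).insert 0) (by
    intro n hn
    simp only [mem_support, hg] at hn
    by_contra hmem
    simp only [Set.mem_insert_iff, Set.mem_singleton_iff, not_or] at hmem
    simp [hmem.1, hmem.2] at hn)
  have hdfin : (support d).Finite := (hfin.union hgfin).subset (by
    intro n hn
    simp only [mem_support, hd] at hn
    by_contra hmem
    simp only [Set.mem_union, mem_support, not_or, not_not] at hmem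
    rw [hmem.1, hmem.2, sub_zero] at hn
    exact hn rfl)
  have hdz : ∀ t : k, ∑ᶠ n, t ^ n • d n = 0 := by
    intro t
    have fc : (support fun n => t ^ n • c n).Finite := hfin.subset (by
      intro n hn; simp only [mem_support] at hn ⊢; intro hx; exact hn (by rw [hx, smul_zero]))
    have fg : (support fun n => t ^ n • g n).Finite := hgfin.subset (by
      intro n hn; simp only [mem_support] at hn ⊢; intro hx; exact hn (by rw [hx, smul_zero]))
    have hsplit : ∑ᶠ n, t ^ n • d n = (∑ᶠ n, t ^ n • c n) - ∑ᶠ n, t ^ n • g n := by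
      rw [← finsum_sub_distrib fc fg]; exact finsum_congr fun n => smul_sub _ _ _
    have hgsum : ∑ᶠ n, t ^ n • g n = v0 + t • v1 := by
      rw [finsum_eq_finset_sum_of_support_subset _ (s := {0, 1}) (by
        intro n hn
        simp only [mem_support] at hn
        by_contra hmem
        simp only [Finset.coe_insert, Finset.coe_singleton, Set.mem_insert_iff,
          Set.mem_singleton_iff, not_or] at hmem
        simp [hg, hmem.1, hmem.2] at hn)]
      simp [hg]
    rw [hsplit, hgsum, h t, sub_self]
  have hall := poly_ext d hdfin hdz
  refine ⟨?_, ?_, fun n => ?_⟩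
  · have := hall 0; simpa [hd, hg, sub_eq_zero] using this
  · have := hall 1; simpa [hd, hg, sub_eq_zero] using this
  · have := hall (n + 2); simpa [hd, hg] using this

lemma finsum_shift_op (f : ℕ → V) (hf : (support f).Finite) (T : Module.End k V) :
    ∑ᶠ n, (T ^ n) ((Nat.casesOn n 0 f : V)) = T (∑ᶠ n, (T ^ n) (f n)) := by
  obtain ⟨N, hN⟩ := hf.bddAbove
  have hsub : support (fun n => (T ^ n) (f n)) ⊆ ↑(Finset.range (N + 1)) := by
    intro n hn
    simp only [mem_support] at hn
    simp only [Finset.coe_range, Set.mem_Iio]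
    have : f n ≠ 0 := fun hx => hn (by rw [hx, map_zero])
    exact Nat.lt_succ_of_le (hN this)
  have hsub2 : support (fun n => (T ^ n) ((Nat.casesOn n 0 f : V))) ⊆
      ↑(Finset.range (N + 2)) := by
    intro n hn
    simp only [mem_support] at hn
    simp only [Finset.coe_range, Set.mem_Iio]
    match n with
    | 0 => simp at hn
    | Nat.succ j =>
      have hfj : f j ≠ 0 := fun hx => hn (by simp [hx])
      have := hN hfj
      omega
  rw [finsum_eq_finset_sum_of_support_subset _ hsub2,
    finsum_eq_finset_sum_of_support_subset _ hsub]
  rw [Finset.sum_range_succ']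
  have h0 : (T ^ 0) ((Nat.casesOn 0 0 f : V)) = 0 := by simp
  rw [h0, add_zero, map_sum]
  exact Finset.sum_congr rfl fun i _ => by
    show (T ^ (i + 1)) (f i) = T ((T ^ i) (f i))
    rw [pow_succ', Module.End.mul_apply]

lemma finsum_shift_sc (f : ℕ → V) (hf : (support f).Finite) (t : k) :
    ∑ᶠ n, t ^ n • (Nat.casesOn n 0 f : V) = t • ∑ᶠ n, t ^ n • f n := by
  have h := finsum_shift_op f hf (sc (k := k) t)
  calc ∑ᶠ n, t ^ n • (Nat.casesOn n 0 f : V)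
      = ∑ᶠ n, ((sc (k := k) t) ^ n) ((Nat.casesOn n 0 f : V)) :=
        finsum_congr fun n => (sc_pow_apply t n _).symm
    _ = sc (k := k) t (∑ᶠ n, ((sc (k := k) t) ^ n) (f n)) := h
    _ = t • ∑ᶠ n, t ^ n • f n := by
        rw [sc_apply]
        exact congrArg _ (finsum_congr fun n => sc_pow_apply t n _)

end PolyExt


lemma lmap_finsum {V W : Type*} [AddCommGroup V] [Module k V] [AddCommGroup W] [Module k W]
    (D : V →ₗ[k] W) {f : ℕ → V} (hf : (support f).Finite) :
    D (∑ᶠ n, f n) = ∑ᶠ n, D (f n) :=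
  D.toAddMonoidHom.map_finsum hf

section Sesq
variable {m : ℕ → P → P → P} {D : Module.End k P}
  (hB : ∀ (n : ℕ) (a a' b b' : P) (r : k),
    m n (a + a') b = m n a b + m n a' b ∧ m n (r • a) b = r • m n a b ∧
    m n a (b + b') = m n a b + m n a b' ∧ m n a (r • b) = r • m n a b)
  (hF : ∀ a b, (support fun n => m n a b).Finite)
  (hS : ∀ (lam : k) (a v : P),
    cev m (sc lam) (D a) v = (-lam) • cev m (sc lam) a v ∧
    cev m (sc lam) a (D v) = D (cev m (sc lam) a v) + lam • cev m (sc lam) a v)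

include hF hS

lemma coeff_D_left [Infinite k] (a v : P) :
    m 0 (D a) v = 0 ∧ ∀ n, m (n + 1) (D a) v = - m n a v := by
  set c : ℕ → P := fun n => m n (D a) v + (Nat.casesOn n 0 (fun j => m j a v) : P) with hc
  have hcfin : (support c).Finite := by
    refine ((hF (D a) v).union ((hF a v).image Nat.succ)).subset ?_
    intro n hn
    simp only [mem_support, hc] at hn
    by_contra hmem
    simp only [Set.mem_union, mem_support, not_or, not_not] at hmem
    apply hn
    rw [hmem.1, zero_add]
    match n with
    | 0 => rfl
    | Nat.succ j =>
      show m j a v = 0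
      by_contra hj
      exact hmem.2 ⟨j, hj, rfl⟩
  have hz : ∀ t : k, ∑ᶠ n, t ^ n • c n = 0 := by
    intro t
    have h1 := (hS t a v).1
    rw [cev_sc, cev_sc] at h1
    have h2 := finsum_shift_sc (fun j => m j a v) (hF a v) t
    have f1 : (support fun n => t ^ n • m n (D a) v).Finite := (hF (D a) v).subset (by
      intro n hn; simp only [mem_support] at hn ⊢; intro hx; exact hn (by rw [hx, smul_zero]))
    have f2 : (support fun n => t ^ n • (Nat.casesOn n 0 (fun j => m j a v) : P)).Finite := by
      refine ((hF a v).image Nat.succ).subset ?_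
      intro n hn
      simp only [mem_support] at hn
      match n with
      | 0 => exact absurd (by simp) hn
      | Nat.succ j =>
        refine ⟨j, ?_, rfl⟩
        simp only [mem_support]
        intro hj
        exact hn (by simp [hj])
    have hsplit : ∑ᶠ n, t ^ n • c n
        = (∑ᶠ n, t ^ n • m n (D a) v)
          + ∑ᶠ n, t ^ n • (Nat.casesOn n 0 (fun j => m j a v) : P) := by
      rw [← finsum_add_distrib f1 f2]
      exact finsum_congr fun n => smul_add _ _ _
    rw [hsplit, h2, h1, neg_smul, neg_add_cancel]
  have hall := poly_ext c hcfin hz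
  constructor
  · have h0 := hall 0
    simpa [hc] using h0
  · intro n
    have hn := hall (n + 1)
    simp only [hc] at hn
    exact eq_neg_of_add_eq_zero_left hn

lemma coeff_D_right [Infinite k] (a v : P) :
    m 0 a (D v) = D (m 0 a v) ∧ ∀ n, m (n + 1) a (D v) = D (m (n + 1) a v) + m n a v := by
  set c : ℕ → P := fun n =>
    m n a (D v) - D (m n a v) - (Nat.casesOn n 0 (fun j => m j a v) : P) with hc
  have hcfin : (support c).Finite := by
    refine (((hF a (D v)).union (hF a v)).union ((hF a v).image Nat.succ)).subset ?_
    intro n hn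
    simp only [mem_support, hc] at hn
    by_contra hmem
    simp only [Set.mem_union, mem_support, not_or, not_not] at hmem
    apply hn
    rw [hmem.1.1, hmem.1.2, map_zero, sub_zero, zero_sub, neg_eq_zero]
    match n with
    | 0 => rfl
    | Nat.succ j =>
      show m j a v = 0
      by_contra hj
      exact hmem.2 ⟨j, hj, rfl⟩
  have hz : ∀ t : k, ∑ᶠ n, t ^ n • c n = 0 := by
    intro t
    have h1 := (hS t a v).2
    rw [cev_sc, cev_sc] at h1
    have h2 := finsum_shift_sc (fun j => m j a v) (hF a v) t
    have f0 : (support fun n => t ^ n • m n a v).Finite := (hF a v).subset (by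
      intro n hn; simp only [mem_support] at hn ⊢; intro hx; exact hn (by rw [hx, smul_zero]))
    have f1 : (support fun n => t ^ n • m n a (D v)).Finite := (hF a (D v)).subset (by
      intro n hn; simp only [mem_support] at hn ⊢; intro hx; exact hn (by rw [hx, smul_zero]))
    have f1' : (support fun n => t ^ n • D (m n a v)).Finite := (hF a v).subset (by
      intro n hn; simp only [mem_support] at hn ⊢
      intro hx; exact hn (by rw [hx, map_zero, smul_zero]))
    have f2 : (support fun n => t ^ n • (Nat.casesOn n 0 (fun j => m j a v) : P)).Finite := by
      refine ((hF a v).image Nat.succ).subset ?_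
      intro n hn
      simp only [mem_support] at hn
      match n with
      | 0 => exact absurd (by simp) hn
      | Nat.succ j =>
        refine ⟨j, ?_, rfl⟩
        simp only [mem_support]
        intro hj
        exact hn (by simp [hj])
    have hD : D (∑ᶠ n, t ^ n • m n a v) = ∑ᶠ n, t ^ n • D (m n a v) := by
      rw [lmap_finsum (k := k) D f0]
      exact finsum_congr fun n => by rw [map_smul]
    have hsplit : ∑ᶠ n, t ^ n • c n
        = ((∑ᶠ n, t ^ n • m n a (D v)) - ∑ᶠ n, t ^ n • D (m n a v))
          - ∑ᶠ n, t ^ n • (Nat.casesOn n 0 (fun j => m j a v) : P) :=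
      calc ∑ᶠ n, t ^ n • c n
          = ∑ᶠ n, ((t ^ n • m n a (D v) - t ^ n • D (m n a v))
              - t ^ n • (Nat.casesOn n 0 (fun j => m j a v) : P)) :=
            finsum_congr fun n => by rw [hc]; rw [smul_sub, smul_sub]
        _ = (∑ᶠ n, (t ^ n • m n a (D v) - t ^ n • D (m n a v)))
              - ∑ᶠ n, t ^ n • (Nat.casesOn n 0 (fun j => m j a v) : P) :=
            finsum_sub_distrib ((f1.union f1').subset (by
              intro n hn
              simp only [mem_support] at hn
              by_contra hmem
              simp only [Set.mem_union, mem_support, not_or, not_not] at hmem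
              rw [hmem.1, hmem.2, sub_zero] at hn
              exact hn rfl)) f2
        _ = _ := by rw [finsum_sub_distrib f1 f1']
    rw [hsplit, h2, ← hD, h1]
    abel
  have hall := poly_ext c hcfin hz
  constructor
  · have h0 := hall 0
    simp only [hc] at h0
    have h0' : m 0 a (D v) - D (m 0 a v) - 0 = 0 := h0
    rw [sub_zero, sub_eq_zero] at h0'
    exact h0'
  · intro n
    have hn := hall (n + 1)
    simp only [hc] at hn
    have hn' : m (n + 1) a (D v) - D (m (n + 1) a v) - m n a v = 0 := hn
    rw [sub_sub, sub_eq_zero] at hn'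
    exact hn'

lemma cev_D_left_op [Infinite k] (T : Module.End k P) (a v : P) :
    cev m T (D a) v = - T (cev m T a v) := by
  obtain ⟨h0, hsucc⟩ := coeff_D_left hF hS a v
  unfold cev
  have heq : (fun n => (T ^ n) (m n (D a) v))
      = fun n => (T ^ n) ((Nat.casesOn n 0 (fun j => - m j a v) : P)) := by
    funext n
    match n with
    | 0 =>
      show (T ^ 0) (m 0 (D a) v) = (T ^ 0) (0 : P)
      rw [h0]
    | Nat.succ j =>
      show (T ^ (j + 1)) (m (j + 1) (D a) v) = (T ^ (j + 1)) (- m j a v)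
      rw [hsucc j]
  rw [heq, finsum_shift_op (fun j => - m j a v) ((hF a v).subset (by
    intro n hn; simp only [mem_support, neg_ne_zero] at hn; exact hn)) T]
  rw [← map_neg]
  congr 1
  rw [← finsum_neg_distrib]
  exact finsum_congr fun n => by rw [map_neg]

lemma cev_D_right_op [Infinite k] (T : Module.End k P) (hcomm : ∀ x, T (D x) = D (T x))
    (a v : P) :
    cev m T a (D v) = D (cev m T a v) + T (cev m T a v) := by
  obtain ⟨h0, hsucc⟩ := coeff_D_right hF hS a v
  have hcn : ∀ (n : ℕ) (x : P), (T ^ n) (D x) = D ((T ^ n) x) := by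
    intro n
    induction n with
    | zero => intro x; rfl
    | succ j ih =>
      intro x
      rw [pow_succ', Module.End.mul_apply, ih, hcomm, Module.End.mul_apply]
  unfold cev
  have heq : (fun n => (T ^ n) (m n a (D v)))
      = fun n => D ((T ^ n) (m n a v))
        + (T ^ n) ((Nat.casesOn n 0 (fun j => m j a v) : P)) := by
    funext n
    match n with
    | 0 =>
      show (T ^ 0) (m 0 a (D v)) = D ((T ^ 0) (m 0 a v)) + (T ^ 0) (0 : P)
      rw [h0, map_zero, add_zero, hcn]
    | Nat.succ j =>
      show (T ^ (j + 1)) (m (j + 1) a (D v))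
        = D ((T ^ (j + 1)) (m (j + 1) a v)) + (T ^ (j + 1)) (m j a v)
      rw [hsucc j, map_add, hcn]
  rw [heq]
  have fD : (support fun n => D ((T ^ n) (m n a v))).Finite := (hF a v).subset (by
    intro n hn; simp only [mem_support] at hn ⊢
    intro hx; exact hn (by rw [hx, map_zero, map_zero]))
  have fS : (support fun n => (T ^ n) ((Nat.casesOn n 0 (fun j => m j a v) : P))).Finite := by
    refine ((hF a v).image Nat.succ).subset ?_
    intro n hn
    simp only [mem_support] at hn
    match n with
    | 0 => exact absurd (by simp) hn
    | Nat.succ j =>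
      refine ⟨j, ?_, rfl⟩
      simp only [mem_support]
      intro hj
      exact hn (by simp [hj])
  rw [finsum_add_distrib fD fS, finsum_shift_op (fun j => m j a v) (hF a v) T]
  congr 1
  exact (lmap_finsum (k := k) D (supp_fin hF T a v)).symm

omit hS in
lemma cev_op_of_affine [Infinite k] (a v w0 w1 : P)
    (hgen : ∀ t : k, cev m (sc t) a v = w0 + t • w1) (T : Module.End k P) :
    cev m T a v = w0 + T w1 := by
  have haff : ∀ t : k, ∑ᶠ n, t ^ n • m n a v = w0 + t • w1 := by
    intro t
    rw [← cev_sc m t a v]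
    exact hgen t
  obtain ⟨h0, h1, h2⟩ := poly_ext_affine (fun n => m n a v) (hF a v) w0 w1 haff
  unfold cev
  rw [finsum_eq_finset_sum_of_support_subset _ (s := {0, 1}) (by
    intro n hn
    simp only [mem_support] at hn
    by_contra hmem
    simp only [Finset.coe_insert, Finset.coe_singleton, Set.mem_insert_iff,
      Set.mem_singleton_iff, not_or] at hmem
    match n with
    | 0 => exact hmem.1 rfl
    | 1 => exact hmem.2 rfl
    | Nat.succ (Nat.succ j) => exact hn (by rw [h2 j, map_zero]))]
  rw [Finset.sum_insert (by simp), Finset.sum_singleton]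
  rw [h0, h1, pow_zero, pow_one, Module.End.one_apply]

end Sesq


section FinsuppP
variable {A : Type*} [AddCommGroup A] [Module k A]

lemma emb_eq (a : A) : emb k A a = Finsupp.single 0 a := rfl

lemma shft_single (n : ℕ) (a : A) :
    shft k A (Finsupp.single n a) = Finsupp.single (n + 1) a := by
  show Finsupp.lmapDomain A k Nat.succ (Finsupp.single n a) = _
  rw [Finsupp.lmapDomain_apply, Finsupp.mapDomain_single]

lemma single_eq_pow (n : ℕ) (a : A) :
    Finsupp.single n a = ((shft k A) ^ n) (emb k A a) := by
  induction n with
  | zero => rfl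
  | succ j ih =>
    rw [pow_succ', Module.End.mul_apply, ← ih, shft_single]

lemma shft_comm_op (l : k) (x : ℕ →₀ A) :
    ((-(sc l) - shft k A : Module.End k (ℕ →₀ A))) (shft k A x)
      = shft k A ((-(sc l) - shft k A : Module.End k (ℕ →₀ A)) x) := by
  simp only [LinearMap.sub_apply, LinearMap.neg_apply, sc_apply, map_sub, map_neg, map_smul]

lemma sing1 {x : A} (h : emb k A x = 0) : x = 0 := by
  rw [emb_eq] at h
  exact Finsupp.single_eq_zero.mp h

lemma sing2 {x y : A} (h : emb k A x + shft k A (emb k A y) = 0) : x = 0 ∧ y = 0 := by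
  rw [emb_eq, emb_eq, shft_single] at h
  constructor
  · have h0 := DFunLike.congr_fun h 0
    simpa using h0
  · have h1 := DFunLike.congr_fun h 1
    simpa using h1

lemma sing3 {x y z : A}
    (h : emb k A x + shft k A (emb k A y) + shft k A (shft k A (emb k A z)) = 0) :
    x = 0 ∧ y = 0 ∧ z = 0 := by
  rw [emb_eq, emb_eq, emb_eq, shft_single, shft_single, shft_single] at h
  refine ⟨?_, ?_, ?_⟩
  · have h0 := DFunLike.congr_fun h 0
    simpa using h0
  · have h1 := DFunLike.congr_fun h 1
    simpa using h1
  · have h2 := DFunLike.congr_fun h 2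
    simpa using h2

end FinsuppP

section Ext
variable [CharZero k] {V : Type*} [AddCommGroup V] [Module k V]

lemma ext1 {v0 v1 : V} (h : ∀ t : k, v0 + t • v1 = 0) : v0 = 0 ∧ v1 = 0 := by
  have h0 := h 0
  rw [zero_smul, add_zero] at h0
  have h1 := h 1
  rw [one_smul, h0, zero_add] at h1
  exact ⟨h0, h1⟩

lemma ext2 {v0 v1 v2 : V} (h : ∀ t : k, v0 + t • v1 + (t * t) • v2 = 0) :
    v0 = 0 ∧ v1 = 0 ∧ v2 = 0 := by
  have h0 := h 0
  simp only [zero_smul, add_zero, zero_mul] at h0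
  have h1 := h 1
  simp only [one_smul, one_mul, h0, zero_add] at h1
  have h2 := h (-1)
  simp only [neg_one_smul, neg_mul, neg_neg, one_mul, one_smul, h0, zero_add] at h2
  have hv2 : (2 : k) • v2 = 0 := by
    have hadd : (v1 + v2) + (-v1 + v2) = 0 := by rw [h1, h2, add_zero]
    rw [two_smul]
    calc v2 + v2 = v1 + v2 + (-v1 + v2) := by abel
      _ = 0 := hadd
  have hv2' : v2 = 0 := by
    rcases smul_eq_zero.mp hv2 with hx | hx
    · exact absurd hx two_ne_zero
    · exact hx
  refine ⟨h0, ?_, hv2'⟩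
  rw [hv2', add_zero] at h1
  exact h1

lemma ext11 {v00 v10 v01 : V} (h : ∀ l mu : k, v00 + l • v10 + mu • v01 = 0) :
    v00 = 0 ∧ v10 = 0 ∧ v01 = 0 := by
  have h1 : ∀ l : k, (v00 + l • v10) = 0 := fun l => (ext1 (fun mu => h l mu)).1
  have h2 := (ext1 (fun mu => h 0 mu)).2
  obtain ⟨a, b⟩ := ext1 h1
  exact ⟨a, b, h2⟩

lemma ext22 {v00 v10 v01 v20 v11 v02 : V}
    (h : ∀ l mu : k, v00 + l • v10 + mu • v01 + (l * l) • v20 + (l * mu) • v11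
      + (mu * mu) • v02 = 0) :
    v00 = 0 ∧ v10 = 0 ∧ v01 = 0 ∧ v20 = 0 ∧ v11 = 0 ∧ v02 = 0 := by
  have key : ∀ mu : k, (v00 + mu • v01 + (mu * mu) • v02) = 0 ∧ (v10 + mu • v11) = 0
      ∧ v20 = 0 := by
    intro mu
    refine ext2 (k := k) (v0 := v00 + mu • v01 + (mu * mu) • v02) (v1 := v10 + mu • v11) (v2 := v20) ?_
    intro l
    calc (v00 + mu • v01 + (mu * mu) • v02) + l • (v10 + mu • v11) + (l * l) • v20
        = v00 + l • v10 + mu • v01 + (l * l) • v20 + (l * mu) • v11 + (mu * mu) • v02 := by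
          module
      _ = 0 := h l mu
  obtain ⟨c1, c2, c3⟩ := ext2 (fun mu => (key mu).1)
  obtain ⟨d1, d2⟩ := ext1 (fun mu => (key mu).2.1)
  exact ⟨c1, d1, c2, (key 0).2.2, d2, c3⟩

end Ext


section Red
variable {A : Type*} [AddCommGroup A] [Module k A]

lemma red (Phi : (ℕ →₀ A) → (ℕ →₀ A) → (ℕ →₀ A) → (ℕ →₀ A)) (r1 r2 r3 : k)
    (hadd1 : ∀ x x' y z, Phi (x + x') y z = Phi x y z + Phi x' y z)
    (hadd2 : ∀ x y y' z, Phi x (y + y') z = Phi x y z + Phi x y' z)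
    (hadd3 : ∀ x y z z', Phi x y (z + z') = Phi x y z + Phi x y z')
    (hD1 : ∀ x y z, Phi (shft k A x) y z = r1 • Phi x y z)
    (hD2 : ∀ x y z, Phi x (shft k A y) z = r2 • Phi x y z)
    (hD3 : ∀ x y z, Phi x y (shft k A z) = shft k A (Phi x y z) + r3 • Phi x y z)
    (hgen : ∀ a b c : A, Phi (emb k A a) (emb k A b) (emb k A c) = 0) :
    ∀ x y z, Phi x y z = 0 := by
  have hsing3 : ∀ (a b : A) (n : ℕ) (c : A),
      Phi (emb k A a) (emb k A b) (Finsupp.single n c) = 0 := by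
    intro a b n
    induction n with
    | zero => intro c; exact hgen a b c
    | succ j ih =>
      intro c
      rw [← shft_single (k := k) j c, hD3, ih c, map_zero, smul_zero, add_zero]
  have h3 : ∀ (a b : A) z, Phi (emb k A a) (emb k A b) z = 0 := by
    intro a b z
    induction z using Finsupp.induction_linear with
    | zero =>
      have h00 := hadd3 (emb k A a) (emb k A b) 0 0
      rw [add_zero] at h00
      exact left_eq_add.mp h00
    | add f g hf hg => rw [hadd3, hf, hg, add_zero]
    | single n c => exact hsing3 a b n c
  have hsing2 : ∀ (a : A) (n : ℕ) (b : A) (z : ℕ →₀ A),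
      Phi (emb k A a) (Finsupp.single n b) z = 0 := by
    intro a n
    induction n with
    | zero => intro b z; exact h3 a b z
    | succ j ih =>
      intro b z
      rw [← shft_single (k := k) j b, hD2, ih b z, smul_zero]
  have h2 : ∀ (a : A) (y z : ℕ →₀ A), Phi (emb k A a) y z = 0 := by
    intro a y z
    induction y using Finsupp.induction_linear with
    | zero =>
      have h00 := hadd2 (emb k A a) 0 0 z
      rw [add_zero] at h00
      exact left_eq_add.mp h00
    | add f g hf hg => rw [hadd2, hf, hg, add_zero]
    | single n b => exact hsing2 a n b z
  have hsing1 : ∀ (n : ℕ) (a : A) (y z : ℕ →₀ A), Phi (Finsupp.single n a) y z = 0 := by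
    intro n
    induction n with
    | zero => intro a y z; exact h2 a y z
    | succ j ih =>
      intro a y z
      rw [← shft_single (k := k) j a, hD1, ih a y z, smul_zero]
  intro x y z
  induction x using Finsupp.induction_linear with
  | zero =>
    have h00 := hadd1 0 0 y z
    rw [add_zero] at h00
    exact left_eq_add.mp h00
  | add f g hf hg => rw [hadd1, hf, hg, add_zero]
  | single n a => exact hsing1 n a y z

end Red

end Stmt14Aux
end

set_option maxHeartbeats 4000000 in
/-- On the free `k[∂]`-module `P = k[∂] ⊗ A`, the operations extending
`a∘_λ b = ∂(b◁a) + λ(a▷b + b◁a) + a⋄b` and `a≻_λ b = a≻b` give a pre-Poisson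
conformal algebra if and only if `(A, ◁, ▷, ≻, ⋄)` is a
pre-Poisson-Gel'fand-Dorfman algebra. -/
theorem stmt14 {k A : Type*} [Field k] [CharZero k] [AddCommGroup A] [Module k A]
    (lhd rhd succA dia : A →ₗ[k] A →ₗ[k] A)
    (circ succ : ℕ → (ℕ →₀ A) → (ℕ →₀ A) → (ℕ →₀ A))
    (hcircBil : BilinMap k circ) (hsuccBil : BilinMap k succ)
    (hcircFs : FinSuppFam circ) (hsuccFs : FinSuppFam succ)
    (hcircSesq : ConfSesq (shft k A) (shft k A) circ)
    (hsuccSesq : ConfSesq (shft k A) (shft k A) succ)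
    -- values on the generators:
    (hcircGen : ∀ (lam : k) (a b : A),
      cev circ (sc lam) (emb k A a) (emb k A b)
        = shft k A (emb k A (lhd b a)) + lam • emb k A (rhd a b + lhd b a)
          + emb k A (dia a b))
    (hsuccGen : ∀ (lam : k) (a b : A),
      cev succ (sc lam) (emb k A a) (emb k A b) = emb k A (succA a b)) :
    IsPrePoissonConf (shft k A) circ succ ↔ IsPrePGDAlg lhd rhd succA dia := by
  have hIk : Infinite k := inferInstance
  have eCal : ∀ (T : Module.End k (ℕ →₀ A)) (x x' y : ℕ →₀ A), cev circ T (x + x') y = cev circ T x y + cev circ T x' y := fun T x x' y => Stmt14Aux.cev_add_left hcircBil hcircFs T x x' y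
  have eCar : ∀ (T : Module.End k (ℕ →₀ A)) (x y y' : ℕ →₀ A), cev circ T x (y + y') = cev circ T x y + cev circ T x y' := fun T x y y' => Stmt14Aux.cev_add_right hcircBil hcircFs T x y y'
  have eCsl : ∀ (T : Module.End k (ℕ →₀ A)) (r : k) (x y : ℕ →₀ A), cev circ T (r • x) y = r • cev circ T x y := fun T r x y => Stmt14Aux.cev_smul_left hcircBil hcircFs T r x y
  have eCsr : ∀ (T : Module.End k (ℕ →₀ A)) (r : k) (x y : ℕ →₀ A), cev circ T x (r • y) = r • cev circ T x y := fun T r x y => Stmt14Aux.cev_smul_right hcircBil hcircFs T r x y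
  have eCnl : ∀ (T : Module.End k (ℕ →₀ A)) (x y : ℕ →₀ A), cev circ T (-x) y = - cev circ T x y := fun T x y => Stmt14Aux.cev_neg_left hcircBil hcircFs T x y
  have eCnr : ∀ (T : Module.End k (ℕ →₀ A)) (x y : ℕ →₀ A), cev circ T x (-y) = - cev circ T x y := fun T x y => Stmt14Aux.cev_neg_right hcircBil hcircFs T x y
  have eCbl : ∀ (T : Module.End k (ℕ →₀ A)) (x x' y : ℕ →₀ A), cev circ T (x - x') y = cev circ T x y - cev circ T x' y := fun T x x' y => Stmt14Aux.cev_sub_left hcircBil hcircFs T x x' y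
  have eCbr : ∀ (T : Module.End k (ℕ →₀ A)) (x y y' : ℕ →₀ A), cev circ T x (y - y') = cev circ T x y - cev circ T x y' := fun T x y y' => Stmt14Aux.cev_sub_right hcircBil hcircFs T x y y'
  have eCdl : ∀ (t : k) (x y : ℕ →₀ A), cev circ (sc t) (shft k A x) y = (-t) • cev circ (sc t) x y := fun t x y => (hcircSesq t x y).1
  have eCdr : ∀ (t : k) (x y : ℕ →₀ A), cev circ (sc t) x (shft k A y) = shft k A (cev circ (sc t) x y) + t • cev circ (sc t) x y := fun t x y => (hcircSesq t x y).2
  have eCdl' : ∀ (t : k) (x y : ℕ →₀ A), cev circ (-sc t - shft k A) (shft k A x) y = -((-sc t - shft k A : Module.End k (ℕ →₀ A)) (cev circ (-sc t - shft k A) x y)) := fun t x y => Stmt14Aux.cev_D_left_op hcircFs hcircSesq _ x y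
  have eCdr' : ∀ (t : k) (x y : ℕ →₀ A), cev circ (-sc t - shft k A) x (shft k A y) = shft k A (cev circ (-sc t - shft k A) x y) + (-sc t - shft k A : Module.End k (ℕ →₀ A)) (cev circ (-sc t - shft k A) x y) := fun t x y => Stmt14Aux.cev_D_right_op hcircFs hcircSesq _ (Stmt14Aux.shft_comm_op t) x y
  have eSal : ∀ (T : Module.End k (ℕ →₀ A)) (x x' y : ℕ →₀ A), cev succ T (x + x') y = cev succ T x y + cev succ T x' y := fun T x x' y => Stmt14Aux.cev_add_left hsuccBil hsuccFs T x x' y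
  have eSar : ∀ (T : Module.End k (ℕ →₀ A)) (x y y' : ℕ →₀ A), cev succ T x (y + y') = cev succ T x y + cev succ T x y' := fun T x y y' => Stmt14Aux.cev_add_right hsuccBil hsuccFs T x y y'
  have eSsl : ∀ (T : Module.End k (ℕ →₀ A)) (r : k) (x y : ℕ →₀ A), cev succ T (r • x) y = r • cev succ T x y := fun T r x y => Stmt14Aux.cev_smul_left hsuccBil hsuccFs T r x y
  have eSsr : ∀ (T : Module.End k (ℕ →₀ A)) (r : k) (x y : ℕ →₀ A), cev succ T x (r • y) = r • cev succ T x y := fun T r x y => Stmt14Aux.cev_smul_right hsuccBil hsuccFs T r x y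
  have eSnl : ∀ (T : Module.End k (ℕ →₀ A)) (x y : ℕ →₀ A), cev succ T (-x) y = - cev succ T x y := fun T x y => Stmt14Aux.cev_neg_left hsuccBil hsuccFs T x y
  have eSnr : ∀ (T : Module.End k (ℕ →₀ A)) (x y : ℕ →₀ A), cev succ T x (-y) = - cev succ T x y := fun T x y => Stmt14Aux.cev_neg_right hsuccBil hsuccFs T x y
  have eSbl : ∀ (T : Module.End k (ℕ →₀ A)) (x x' y : ℕ →₀ A), cev succ T (x - x') y = cev succ T x y - cev succ T x' y := fun T x x' y => Stmt14Aux.cev_sub_left hsuccBil hsuccFs T x x' y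
  have eSbr : ∀ (T : Module.End k (ℕ →₀ A)) (x y y' : ℕ →₀ A), cev succ T x (y - y') = cev succ T x y - cev succ T x y' := fun T x y y' => Stmt14Aux.cev_sub_right hsuccBil hsuccFs T x y y'
  have eSdl : ∀ (t : k) (x y : ℕ →₀ A), cev succ (sc t) (shft k A x) y = (-t) • cev succ (sc t) x y := fun t x y => (hsuccSesq t x y).1
  have eSdr : ∀ (t : k) (x y : ℕ →₀ A), cev succ (sc t) x (shft k A y) = shft k A (cev succ (sc t) x y) + t • cev succ (sc t) x y := fun t x y => (hsuccSesq t x y).2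
  have eSdl' : ∀ (t : k) (x y : ℕ →₀ A), cev succ (-sc t - shft k A) (shft k A x) y = -((-sc t - shft k A : Module.End k (ℕ →₀ A)) (cev succ (-sc t - shft k A) x y)) := fun t x y => Stmt14Aux.cev_D_left_op hsuccFs hsuccSesq _ x y
  have eSdr' : ∀ (t : k) (x y : ℕ →₀ A), cev succ (-sc t - shft k A) x (shft k A y) = shft k A (cev succ (-sc t - shft k A) x y) + (-sc t - shft k A : Module.End k (ℕ →₀ A)) (cev succ (-sc t - shft k A) x y) := fun t x y => Stmt14Aux.cev_D_right_op hsuccFs hsuccSesq _ (Stmt14Aux.shft_comm_op t) x y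
  have eCg : ∀ (T : Module.End k (ℕ →₀ A)) (a b : A), cev circ T (emb k A a) (emb k A b) = (shft k A (emb k A (lhd b a)) + emb k A (dia a b)) + T (emb k A (rhd a b + lhd b a)) := fun T a b => Stmt14Aux.cev_op_of_affine hcircFs (emb k A a) (emb k A b) (shft k A (emb k A (lhd b a)) + emb k A (dia a b)) (emb k A (rhd a b + lhd b a)) (fun t => by rw [hcircGen t a b]; abel) T
  have eSg : ∀ (T : Module.End k (ℕ →₀ A)) (a b : A), cev succ T (emb k A a) (emb k A b) = emb k A (succA a b) := by
    intro T a b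
    have h := Stmt14Aux.cev_op_of_affine hsuccFs (emb k A a) (emb k A b) (emb k A (succA a b)) 0 (fun t => by rw [hsuccGen t a b, smul_zero, add_zero]) T
    rwa [map_zero, add_zero] at h
  have hexp1 : ∀ (lam mu : k) (a b c : A), (cev circ (sc lam) (emb k A (a)) (cev circ (sc mu) (emb k A (b)) (emb k A (c))) - cev circ (sc (lam + mu)) (cev circ (sc lam) (emb k A (a)) (emb k A (b))) (emb k A (c))) - (cev circ (sc mu) (emb k A (b)) (cev circ (sc lam) (emb k A (a)) (emb k A (c))) - cev circ (sc (lam + mu)) (cev circ (sc mu) (emb k A (b)) (emb k A (a))) (emb k A (c))) = (emb k A (dia (dia b a) c + dia a (dia b c) - dia (dia a b) c - dia b (dia a c)) + shft k A (emb k A (lhd (dia b c) a + lhd c (dia b a) + dia a (lhd c b) - lhd (dia a c) b - lhd c (dia a b) - dia b (lhd c a))) + shft k A (shft k A (emb k A (lhd (lhd c b) a - lhd (lhd c a) b)))) + lam • (emb k A (lhd (dia b c) a + lhd c (dia b a) + rhd (dia b a) c + rhd a (dia b c) + dia a (lhd c b) - lhd c (dia a b) - rhd (dia a b) c - dia (lhd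 a b) c - dia (rhd a b) c - dia b (lhd c a) - dia b (rhd a c)) + shft k A (emb k A (lhd (lhd c b) a + lhd (lhd c b) a + rhd a (lhd c b) - lhd (lhd c a) b - lhd (rhd a c) b - lhd c (lhd a b) - lhd c (rhd a b)))) + mu • (emb k A (lhd c (dia b a) + rhd (dia b a) c + dia (lhd b a) c + dia (rhd b a) c + dia a (lhd c b) + dia a (rhd b c) - lhd (dia a c) b - lhd c (dia a b) - rhd (dia a b) c - rhd b (dia a c) - dia b (lhd c a)) + shft k A (emb k A (lhd (lhd c b) a + lhd (rhd b c) a + lhd c (lhd b a) + lhd c (rhd b a) - lhd (lhd c a) b - lhd (lhd c a) b - rhd b (lhd c a)))) + (lam * lam) • (emb k A (lhd (lhd c b) a + rhd a (lhd c b) - lhd c (lhd a b) - lhd c (rhd a b) - rhd (lhd a b) c - rhd (rhd a b) c)) + (lam * mu) • (emb k A (lhd (lhd c b) a + lhd (rhd b c) a + lhd c (lhd b a) + lhd c (rhd b a) + rhd (lhd b a) c + rhd (rhd b a) c + rhd a (lhd c b) + rhd a (rhd b c) - lhd (lhd c a) b - lhd (rhd a c) b - lhd c (lhd a b) - lhd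 c (rhd a b) - rhd (lhd a b) c - rhd (rhd a b) c - rhd b (lhd c a) - rhd b (rhd a c))) + (mu * mu) • (emb k A (lhd c (lhd b a) + lhd c (rhd b a) + rhd (lhd b a) c + rhd (rhd b a) c - lhd (lhd c a) b - rhd b (lhd c a))) := by
    intro lam mu a b c
    simp only [eCg, eSg, eCal, eCar, eCsl, eCsr, eCnl, eCnr, eCbl, eCbr, eSal, eSar, eSsl, eSsr, eSnl, eSnr, eSbl, eSbr, eCdl, eCdr, eCdl', eCdr', eSdl, eSdr, eSdl', eSdr', Stmt14Aux.sc_apply, LinearMap.sub_apply, LinearMap.neg_apply, LinearMap.add_apply, map_add, map_sub, map_neg, map_smul, smul_add, smul_sub, smul_neg]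
    module
  have hexp2 : ∀ (lam mu : k) (a b c : A), cev succ (sc lam) (emb k A (a)) (cev succ (sc mu) (emb k A (b)) (emb k A (c))) - cev succ (sc (lam + mu)) (cev succ (sc lam) (emb k A (a)) (emb k A (b)) + cev succ (-sc lam - shft k A) (emb k A (b)) (emb k A (a))) (emb k A (c)) = emb k A (succA a (succA b c) - succA (succA a b) c - succA (succA b a) c) := by
    intro lam mu a b c
    simp only [eCg, eSg, eCal, eCar, eCsl, eCsr, eCnl, eCnr, eCbl, eCbr, eSal, eSar, eSsl, eSsr, eSnl, eSnr, eSbl, eSbr, eCdl, eCdr, eCdl', eCdr', eSdl, eSdr, eSdl', eSdr', Stmt14Aux.sc_apply, LinearMap.sub_apply, LinearMap.neg_apply, LinearMap.add_apply, map_add, map_sub, map_neg, map_smul, smul_add, smul_sub, smul_neg]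
    module
  have hexp3 : ∀ (lam mu : k) (a b c : A), cev succ (sc (lam + mu)) (cev circ (sc lam) (emb k A (a)) (emb k A (b)) - cev circ (-sc lam - shft k A) (emb k A (b)) (emb k A (a))) (emb k A (c)) - (cev circ (sc lam) (emb k A (a)) (cev succ (sc mu) (emb k A (b)) (emb k A (c))) - cev succ (sc mu) (emb k A (b)) (cev circ (sc lam) (emb k A (a)) (emb k A (c)))) = (emb k A (succA (dia a b) c + succA b (dia a c) - succA (dia b a) c - dia a (succA b c)) + shft k A (emb k A (succA b (lhd c a) - lhd (succA b c) a))) + lam • (emb k A (succA (lhd a b) c + succA (rhd a b) c + succA b (lhd c a) + succA b (rhd a c) - lhd (succA b c) a - rhd a (succA b c))) + mu • (emb k A (succA b (lhd c a) - succA (lhd b a) c - succA (rhd b a) c)) := by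
    intro lam mu a b c
    simp only [eCg, eSg, eCal, eCar, eCsl, eCsr, eCnl, eCnr, eCbl, eCbr, eSal, eSar, eSsl, eSsr, eSnl, eSnr, eSbl, eSbr, eCdl, eCdr, eCdl', eCdr', eSdl, eSdr, eSdl', eSdr', Stmt14Aux.sc_apply, LinearMap.sub_apply, LinearMap.neg_apply, LinearMap.add_apply, map_add, map_sub, map_neg, map_smul, smul_add, smul_sub, smul_neg]
    module
  have hexp4 : ∀ (lam mu : k) (a b c : A), cev circ (sc (lam + mu)) (cev succ (sc lam) (emb k A (a)) (emb k A (b)) + cev succ (-sc lam - shft k A) (emb k A (b)) (emb k A (a))) (emb k A (c)) - (cev succ (sc lam) (emb k A (a)) (cev circ (sc mu) (emb k A (b)) (emb k A (c))) + cev succ (sc mu) (emb k A (b)) (cev circ (sc lam) (emb k A (a)) (emb k A (c)))) = (emb k A (dia (succA a b) c + dia (succA b a) c - succA a (dia b c) - succA b (dia a c)) + shft k A (emb k A (lhd c (succA a b) + lhd c (succA b a) - succA a (lhd c b) - succA b (lhd c a)))) + lam • (emb k A (lhd c (succA a b) + lhd c (succA b a) + rhd (succA a b) c + rhd (succA b a)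 c - succA a (lhd c b) - succA b (lhd c a) - succA b (rhd a c))) + mu • (emb k A (lhd c (succA a b) + lhd c (succA b a) + rhd (succA a b) c + rhd (succA b a) c - succA a (lhd c b) - succA a (rhd b c) - succA b (lhd c a))) := by
    intro lam mu a b c
    simp only [eCg, eSg, eCal, eCar, eCsl, eCsr, eCnl, eCnr, eCbl, eCbr, eSal, eSar, eSsl, eSsr, eSnl, eSnr, eSbl, eSbr, eCdl, eCdr, eCdl', eCdr', eSdl, eSdr, eSdl', eSdr', Stmt14Aux.sc_apply, LinearMap.sub_apply, LinearMap.neg_apply, LinearMap.add_apply, map_add, map_sub, map_neg, map_smul, smul_add, smul_sub, smul_neg]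
    module
  constructor
  · rintro ⟨⟨-, -, -, hax1⟩, ⟨-, -, -, hax2⟩, hax3, hax4⟩
    have hK1 : ∀ a b c : A, (dia (dia b a) c + dia a (dia b c) - dia (dia a b) c - dia b (dia a c) = 0) ∧ (lhd c (dia b a) + rhd (dia b a) c + dia (lhd b a) c + dia (rhd b a) c + dia a (lhd c b) + dia a (rhd b c) - lhd (dia a c) b - lhd c (dia a b) - rhd (dia a b) c - rhd b (dia a c) - dia b (lhd c a) = 0) ∧ (lhd c (lhd b a) + lhd c (rhd b a) + rhd (lhd b a) c + rhd (rhd b a) c - lhd (lhd c a) b - rhd b (lhd c a) = 0) ∧ (lhd (dia b c) a + lhd c (dia b a) + rhd (dia b a) c + rhd a (dia b c) + dia a (lhd c b) - lhd c (dia a b) - rhd (dia a b) c - dia (lhd a b) c - dia (rhd a b) c - dia b (lhd c a) - dia b (rhd a c) = 0) ∧ (lhd (lhd c b) a + lhd (rhd b c) a + lhd c (lhd b a) + lhd c (rhd b a) + rhd (lhd b a) c + rhd (rhd b a) c + rhd a (lhd c b) + rhd a (rhd b c) - lhd (lhd c a) b - lhd (rhd a c) b - lhd c (lhd a b) - lhd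 c (rhd a b) - rhd (lhd a b) c - rhd (rhd a b) c - rhd b (lhd c a) - rhd b (rhd a c) = 0) ∧ (lhd (lhd c b) a + rhd a (lhd c b) - lhd c (lhd a b) - lhd c (rhd a b) - rhd (lhd a b) c - rhd (rhd a b) c = 0) ∧ (lhd (dia b c) a + lhd c (dia b a) + dia a (lhd c b) - lhd (dia a c) b - lhd c (dia a b) - dia b (lhd c a) = 0) ∧ (lhd (lhd c b) a + lhd (rhd b c) a + lhd c (lhd b a) + lhd c (rhd b a) - lhd (lhd c a) b - lhd (lhd c a) b - rhd b (lhd c a) = 0) ∧ (lhd (lhd c b) a + lhd (lhd c b) a + rhd a (lhd c b) - lhd (lhd c a) b - lhd (rhd a c) b - lhd c (lhd a b) - lhd c (rhd a b) = 0) ∧ (lhd (lhd c b) a - lhd (lhd c a) b = 0) := by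
      intro a b c
      have hq : ∀ lam mu : k, (emb k A (dia (dia b a) c + dia a (dia b c) - dia (dia a b) c - dia b (dia a c)) + shft k A (emb k A (lhd (dia b c) a + lhd c (dia b a) + dia a (lhd c b) - lhd (dia a c) b - lhd c (dia a b) - dia b (lhd c a))) + shft k A (shft k A (emb k A (lhd (lhd c b) a - lhd (lhd c a) b)))) + lam • (emb k A (lhd (dia b c) a + lhd c (dia b a) + rhd (dia b a) c + rhd a (dia b c) + dia a (lhd c b) - lhd c (dia a b) - rhd (dia a b) c - dia (lhd a b) c - dia (rhd a b) c - dia b (lhd c a) - dia b (rhd a c)) + shft k A (emb k A (lhd (lhd c b) a + lhd (lhd c b) a + rhd a (lhd c b) - lhd (lhd c a) b - lhd (rhd a c) b - lhd c (lhd a b) - lhd c (rhd a b)))) + mu • (emb k A (lhd c (dia b a) + rhd (dia b a) c + dia (lhd b a) c + dia (rhd b a) c + dia a (lhd c b) + dia a (rhd b c) - lhd (dia a c) b - lhd c (dia a b) - rhd (dia a b) c - rhd b (dia a c) - dia b (lhd c a)) + shft k A (emb k A (lhd (lhd c b) a + lhd (rhd b c) a + lhd c (lhd b a) + lhd c (rhd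 b a) - lhd (lhd c a) b - lhd (lhd c a) b - rhd b (lhd c a)))) + (lam * lam) • (emb k A (lhd (lhd c b) a + rhd a (lhd c b) - lhd c (lhd a b) - lhd c (rhd a b) - rhd (lhd a b) c - rhd (rhd a b) c)) + (lam * mu) • (emb k A (lhd (lhd c b) a + lhd (rhd b c) a + lhd c (lhd b a) + lhd c (rhd b a) + rhd (lhd b a) c + rhd (rhd b a) c + rhd a (lhd c b) + rhd a (rhd b c) - lhd (lhd c a) b - lhd (rhd a c) b - lhd c (lhd a b) - lhd c (rhd a b) - rhd (lhd a b) c - rhd (rhd a b) c - rhd b (lhd c a) - rhd b (rhd a c))) + (mu * mu) • (emb k A (lhd c (lhd b a) + lhd c (rhd b a) + rhd (lhd b a) c + rhd (rhd b a) c - lhd (lhd c a) b - rhd b (lhd c a))) = 0 := by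
        intro lam mu
        have h0 : (cev circ (sc lam) (emb k A (a)) (cev circ (sc mu) (emb k A (b)) (emb k A (c))) - cev circ (sc (lam + mu)) (cev circ (sc lam) (emb k A (a)) (emb k A (b))) (emb k A (c))) - (cev circ (sc mu) (emb k A (b)) (cev circ (sc lam) (emb k A (a)) (emb k A (c))) - cev circ (sc (lam + mu)) (cev circ (sc mu) (emb k A (b)) (emb k A (a))) (emb k A (c))) = 0 := sub_eq_zero.mpr (hax1 lam mu (emb k A a) (emb k A b) (emb k A c))
        rw [hexp1 lam mu a b c] at h0
        exact h0
      obtain ⟨z00, z10, z01, z20, z11, z02⟩ := Stmt14Aux.ext22 hq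
      obtain ⟨w1, w2, w3⟩ := Stmt14Aux.sing3 z00
      obtain ⟨w4, w5⟩ := Stmt14Aux.sing2 z10
      obtain ⟨w6, w7⟩ := Stmt14Aux.sing2 z01
      exact ⟨w1, w6, Stmt14Aux.sing1 z02, w4, Stmt14Aux.sing1 z11, Stmt14Aux.sing1 z20, w2, w7, w5, w3⟩
    have hK2 : ∀ a b c : A, (succA a (succA b c) - succA (succA a b) c - succA (succA b a) c = 0) := by
      intro a b c
      have h0 : cev succ (sc (0:k)) (emb k A (a)) (cev succ (sc (0:k)) (emb k A (b)) (emb k A (c))) - cev succ (sc ((0:k) + (0:k))) (cev succ (sc (0:k)) (emb k A (a)) (emb k A (b)) + cev succ (-sc (0:k) - shft k A) (emb k A (b)) (emb k A (a))) (emb k A (c)) = 0 := sub_eq_zero.mpr (hax2 0 0 (emb k A a) (emb k A b) (emb k A c))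
      rw [hexp2 0 0 a b c] at h0
      exact Stmt14Aux.sing1 h0
    have hK3 : ∀ a b c : A, (succA (dia a b) c + succA b (dia a c) - succA (dia b a) c - dia a (succA b c) = 0) ∧ (succA b (lhd c a) - succA (lhd b a) c - succA (rhd b a) c = 0) ∧ (succA (lhd a b) c + succA (rhd a b) c + succA b (lhd c a) + succA b (rhd a c) - lhd (succA b c) a - rhd a (succA b c) = 0) ∧ (succA b (lhd c a) - lhd (succA b c) a = 0) := by
      intro a b c
      have hq : ∀ lam mu : k, (emb k A (succA (dia a b) c + succA b (dia a c) - succA (dia b a) c - dia a (succA b c)) + shft k A (emb k A (succA b (lhd c a) - lhd (succA b c) a))) + lam • (emb k A (succA (lhd a b) c + succA (rhd a b) c + succA b (lhd c a) + succA b (rhd a c) - lhd (succA b c) a - rhd a (succA b c))) + mu • (emb k A (succA b (lhd c a) - succA (lhd b a) c - succA (rhd b a) c)) = 0 := by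
        intro lam mu
        have h0 : cev succ (sc (lam + mu)) (cev circ (sc lam) (emb k A (a)) (emb k A (b)) - cev circ (-sc lam - shft k A) (emb k A (b)) (emb k A (a))) (emb k A (c)) - (cev circ (sc lam) (emb k A (a)) (cev succ (sc mu) (emb k A (b)) (emb k A (c))) - cev succ (sc mu) (emb k A (b)) (cev circ (sc lam) (emb k A (a)) (emb k A (c)))) = 0 := sub_eq_zero.mpr (hax3 lam mu (emb k A a) (emb k A b) (emb k A c))
        rw [hexp3 lam mu a b c] at h0
        exact h0
      obtain ⟨z00, z10, z01⟩ := Stmt14Aux.ext11 hq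
      obtain ⟨w1, w2⟩ := Stmt14Aux.sing2 z00
      exact ⟨w1, Stmt14Aux.sing1 z01, Stmt14Aux.sing1 z10, w2⟩
    have hK4 : ∀ a b c : A, (dia (succA a b) c + dia (succA b a) c - succA a (dia b c) - succA b (dia a c) = 0) ∧ (lhd c (succA a b) + lhd c (succA b a) + rhd (succA a b) c + rhd (succA b a) c - succA a (lhd c b) - succA a (rhd b c) - succA b (lhd c a) = 0) ∧ (lhd c (succA a b) + lhd c (succA b a) + rhd (succA a b) c + rhd (succA b a) c - succA a (lhd c b) - succA b (lhd c a) - succA b (rhd a c) = 0) ∧ (lhd c (succA a b) + lhd c (succA b a) - succA a (lhd c b) - succA b (lhd c a) = 0) := by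
      intro a b c
      have hq : ∀ lam mu : k, (emb k A (dia (succA a b) c + dia (succA b a) c - succA a (dia b c) - succA b (dia a c)) + shft k A (emb k A (lhd c (succA a b) + lhd c (succA b a) - succA a (lhd c b) - succA b (lhd c a)))) + lam • (emb k A (lhd c (succA a b) + lhd c (succA b a) + rhd (succA a b) c + rhd (succA b a) c - succA a (lhd c b) - succA b (lhd c a) - succA b (rhd a c))) + mu • (emb k A (lhd c (succA a b) + lhd c (succA b a) + rhd (succA a b) c + rhd (succA b a) c - succA a (lhd c b) - succA a (rhd b c) - succA b (lhd c a))) = 0 := by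
        intro lam mu
        have h0 : cev circ (sc (lam + mu)) (cev succ (sc lam) (emb k A (a)) (emb k A (b)) + cev succ (-sc lam - shft k A) (emb k A (b)) (emb k A (a))) (emb k A (c)) - (cev succ (sc lam) (emb k A (a)) (cev circ (sc mu) (emb k A (b)) (emb k A (c))) + cev succ (sc mu) (emb k A (b)) (cev circ (sc lam) (emb k A (a)) (emb k A (c)))) = 0 := sub_eq_zero.mpr (hax4 lam mu (emb k A a) (emb k A b) (emb k A c))
        rw [hexp4 lam mu a b c] at h0
        exact h0
      obtain ⟨z00, z10, z01⟩ := Stmt14Aux.ext11 hq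
      obtain ⟨w1, w2⟩ := Stmt14Aux.sing2 z00
      exact ⟨w1, Stmt14Aux.sing1 z01, Stmt14Aux.sing1 z10, w2⟩
    obtain ⟨hK1_000, hK1_001, hK1_002, hK1_010, hK1_011, hK1_020, hK1_100, hK1_101, hK1_110, hK1_200⟩ : (∀ a b c : A, dia (dia b a) c + dia a (dia b c) - dia (dia a b) c - dia b (dia a c) = 0) ∧ (∀ a b c : A, lhd c (dia b a) + rhd (dia b a) c + dia (lhd b a) c + dia (rhd b a) c + dia a (lhd c b) + dia a (rhd b c) - lhd (dia a c) b - lhd c (dia a b) - rhd (dia a b) c - rhd b (dia a c) - dia b (lhd c a) = 0) ∧ (∀ a b c : A, lhd c (lhd b a) + lhd c (rhd b a) + rhd (lhd b a) c + rhd (rhd b a) c - lhd (lhd c a) b - rhd b (lhd c a) = 0) ∧ (∀ a b c : A, lhd (dia b c) a + lhd c (dia b a) + rhd (dia b a) c + rhd a (dia b c) + dia a (lhd c b) - lhd c (dia a b) - rhd (dia a b) c - dia (lhd a b) c - dia (rhd a b) c - dia b (lhd c a) - dia b (rhd a c) = 0) ∧ (∀ a b c : A, lhd (lhd c b) a + lhd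 (rhd b c) a + lhd c (lhd b a) + lhd c (rhd b a) + rhd (lhd b a) c + rhd (rhd b a) c + rhd a (lhd c b) + rhd a (rhd b c) - lhd (lhd c a) b - lhd (rhd a c) b - lhd c (lhd a b) - lhd c (rhd a b) - rhd (lhd a b) c - rhd (rhd a b) c - rhd b (lhd c a) - rhd b (rhd a c) = 0) ∧ (∀ a b c : A, lhd (lhd c b) a + rhd a (lhd c b) - lhd c (lhd a b) - lhd c (rhd a b) - rhd (lhd a b) c - rhd (rhd a b) c = 0) ∧ (∀ a b c : A, lhd (dia b c) a + lhd c (dia b a) + dia a (lhd c b) - lhd (dia a c) b - lhd c (dia a b) - dia b (lhd c a) = 0) ∧ (∀ a b c : A, lhd (lhd c b) a + lhd (rhd b c) a + lhd c (lhd b a) + lhd c (rhd b a) - lhd (lhd c a) b - lhd (lhd c a) b - rhd b (lhd c a) = 0) ∧ (∀ a b c : A, lhd (lhd c b) a + lhd (lhd c b) a + rhd a (lhd c b) - lhd (lhd c a) b - lhd (rhd a c) b - lhd c (lhd a b) - lhd c (rhd a b) = 0) ∧ (∀ a b c : A, lhd (lhd c b) a - lhd (lhd c a) b = 0) := ⟨fun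 a b c => (hK1 a b c).1, fun a b c => (hK1 a b c).2.1, fun a b c => (hK1 a b c).2.2.1, fun a b c => (hK1 a b c).2.2.2.1, fun a b c => (hK1 a b c).2.2.2.2.1, fun a b c => (hK1 a b c).2.2.2.2.2.1, fun a b c => (hK1 a b c).2.2.2.2.2.2.1, fun a b c => (hK1 a b c).2.2.2.2.2.2.2.1, fun a b c => (hK1 a b c).2.2.2.2.2.2.2.2.1, fun a b c => (hK1 a b c).2.2.2.2.2.2.2.2.2⟩
    have hK2_000 := hK2
    obtain ⟨hK3_000, hK3_001, hK3_010, hK3_100⟩ : (∀ a b c : A, succA (dia a b) c + succA b (dia a c) - succA (dia b a) c - dia a (succA b c) = 0) ∧ (∀ a b c : A, succA b (lhd c a) - succA (lhd b a) c - succA (rhd b a) c = 0) ∧ (∀ a b c : A, succA (lhd a b) c + succA (rhd a b) c + succA b (lhd c a) + succA b (rhd a c) - lhd (succA b c) a - rhd a (succA b c) = 0) ∧ (∀ a b c : A, succA b (lhd c a) - lhd (succA b c) a = 0) := ⟨fun a b c => (hK3 a b c).1, fun a b c => (hK3 a b c).2.1, fun a b c => (hK3 a b c).2.2.1, fun a b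 c => (hK3 a b c).2.2.2⟩
    obtain ⟨hK4_000, hK4_001, hK4_010, hK4_100⟩ : (∀ a b c : A, dia (succA a b) c + dia (succA b a) c - succA a (dia b c) - succA b (dia a c) = 0) ∧ (∀ a b c : A, lhd c (succA a b) + lhd c (succA b a) + rhd (succA a b) c + rhd (succA b a) c - succA a (lhd c b) - succA a (rhd b c) - succA b (lhd c a) = 0) ∧ (∀ a b c : A, lhd c (succA a b) + lhd c (succA b a) + rhd (succA a b) c + rhd (succA b a) c - succA a (lhd c b) - succA b (lhd c a) - succA b (rhd a c) = 0) ∧ (∀ a b c : A, lhd c (succA a b) + lhd c (succA b a) - succA a (lhd c b) - succA b (lhd c a) = 0) := ⟨fun a b c => (hK4 a b c).1, fun a b c => (hK4 a b c).2.1, fun a b c => (hK4 a b c).2.2.1, fun a b c => (hK4 a b c).2.2.2⟩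
    refine ⟨⟨?_, ?_, ?_, ?_⟩, ?_, ?_, ?_, ?_, ?_, ?_, ?_, ?_, ?_, ?_, ?_⟩
    · intro a b c
      rw [← sub_eq_zero]
      have hgoal : (rhd a (rhd b c)) - (rhd (rhd a b + lhd a b) c + rhd b (rhd a c) - rhd (rhd b a + lhd b a) c) = (lhd (lhd c b) a + lhd (rhd b c) a + lhd c (lhd b a) + lhd c (rhd b a) + rhd (lhd b a) c + rhd (rhd b a) c + rhd a (lhd c b) + rhd a (rhd b c) - lhd (lhd c a) b - lhd (rhd a c) b - lhd c (lhd a b) - lhd c (rhd a b) - rhd (lhd a b) c - rhd (rhd a b) c - rhd b (lhd c a) - rhd b (rhd a c)) + (lhd (lhd c a) b + lhd (rhd a c) b + lhd c (lhd a b) + lhd c (rhd a b) - lhd (lhd c b) a - lhd (lhd c b) a - rhd a (lhd c b)) + (lhd (lhd c b) a - lhd (lhd c a) b) + (lhd (lhd c b) a - lhd (lhd c a) b) - (lhd (lhd c b) a + lhd (rhd b c) a + lhd c (lhd b a) + lhd c (rhd b a) - lhd (lhd c a) b - lhd (lhd c a) b - rhd b (lhd c a)) := by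
        try simp only [map_add, map_sub, map_neg, LinearMap.add_apply, LinearMap.sub_apply, LinearMap.neg_apply]
        abel
      rw [hgoal, hK1_011 a b c, hK1_101 a b c, hK1_101 b a c, hK1_200 a b c] <;> simp
    · intro a b c
      rw [← sub_eq_zero]
      have hgoal : (rhd a (lhd b c)) - (lhd (rhd a b) c + lhd b (lhd a c + rhd a c) - lhd (lhd b a) c) = -(lhd (lhd b a) c + lhd (rhd a b) c + lhd b (lhd a c) + lhd b (rhd a c) - lhd (lhd b c) a - lhd (lhd b c) a - rhd a (lhd b c)) - (lhd (lhd b c) a - lhd (lhd b a) c) - (lhd (lhd b c) a - lhd (lhd b a) c) := by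
        try simp only [map_add, map_sub, map_neg, LinearMap.add_apply, LinearMap.sub_apply, LinearMap.neg_apply]
        abel
      rw [hgoal, hK1_101 c a b, hK1_200 a c b] <;> simp
    · intro a b c
      rw [← sub_eq_zero]
      have hgoal : (rhd (lhd a b + rhd a b) c) - (lhd (rhd a c) b) = (lhd c (lhd a b) + lhd c (rhd a b) + rhd (lhd a b) c + rhd (rhd a b) c - lhd (lhd c b) a - rhd a (lhd c b)) - (lhd (lhd c a) b + lhd (rhd a c) b + lhd c (lhd a b) + lhd c (rhd a b) - lhd (lhd c b) a - lhd (lhd c b) a - rhd a (lhd c b)) - (lhd (lhd c b) a - lhd (lhd c a) b) := by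
        try simp only [map_add, map_sub, map_neg, LinearMap.add_apply, LinearMap.sub_apply, LinearMap.neg_apply]
        abel
      rw [hgoal, hK1_002 b a c, hK1_101 b a c, hK1_200 a b c] <;> simp
    · intro a b c
      rw [← sub_eq_zero]
      have hgoal : (lhd (lhd a b) c) - (lhd (lhd a c) b) = -(lhd (lhd a c) b - lhd (lhd a b) c) := by
        try simp only [map_add, map_sub, map_neg, LinearMap.add_apply, LinearMap.sub_apply, LinearMap.neg_apply]
        abel
      rw [hgoal, hK1_200 b c a] <;> simp
    · intro a b c
      rw [← sub_eq_zero]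
      have hgoal : (succA a (succA b c)) - (succA (succA b a + succA a b) c) = (succA a (succA b c) - succA (succA a b) c - succA (succA b a) c) := by
        try simp only [map_add, map_sub, map_neg, LinearMap.add_apply, LinearMap.sub_apply, LinearMap.neg_apply]
        abel
      rw [hgoal, hK2_000 a b c] <;> simp
    · intro a b c
      rw [← sub_eq_zero]
      have hgoal : (dia (dia a b) c - dia a (dia b c)) - (dia (dia b a) c - dia b (dia a c)) = -(dia (dia b a) c + dia a (dia b c) - dia (dia a b) c - dia b (dia a c)) := by
        try simp only [map_add, map_sub, map_neg, LinearMap.add_apply, LinearMap.sub_apply, LinearMap.neg_apply]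
        abel
      rw [hgoal, hK1_000 a b c] <;> simp
    · intro a b c
      rw [← sub_eq_zero]
      have hgoal : (rhd (succA a b + succA b a) c) - (succA a (rhd b c)) = (lhd c (succA a b) + lhd c (succA b a) + rhd (succA a b) c + rhd (succA b a) c - succA a (lhd c b) - succA a (rhd b c) - succA b (lhd c a)) - (lhd c (succA a b) + lhd c (succA b a) - succA a (lhd c b) - succA b (lhd c a)) := by
        try simp only [map_add, map_sub, map_neg, LinearMap.add_apply, LinearMap.sub_apply, LinearMap.neg_apply]
        abel
      rw [hgoal, hK4_001 a b c, hK4_100 a b c] <;> simp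
    · intro a b c
      rw [← sub_eq_zero]
      have hgoal : (lhd (succA a c) b) - (succA a (lhd c b)) = -(succA a (lhd c b) - lhd (succA a c) b) := by
        try simp only [map_add, map_sub, map_neg, LinearMap.add_apply, LinearMap.sub_apply, LinearMap.neg_apply]
        abel
      rw [hgoal, hK3_100 b a c] <;> simp
    · intro a b c
      rw [← sub_eq_zero]
      have hgoal : (succA a (lhd c b)) - (succA (lhd a b + rhd a b) c) = (succA a (lhd c b) - succA (lhd a b) c - succA (rhd a b) c) := by
        try simp only [map_add, map_sub, map_neg, LinearMap.add_apply, LinearMap.sub_apply, LinearMap.neg_apply]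
        abel
      rw [hgoal, hK3_001 b a c] <;> simp
    · intro a b c
      rw [← sub_eq_zero]
      have hgoal : (rhd a (succA b c)) - (succA (lhd a b + rhd a b) c + succA b (rhd a c)) = (succA b (lhd c a) - lhd (succA b c) a) - (succA (lhd a b) c + succA (rhd a b) c + succA b (lhd c a) + succA b (rhd a c) - lhd (succA b c) a - rhd a (succA b c)) := by
        try simp only [map_add, map_sub, map_neg, LinearMap.add_apply, LinearMap.sub_apply, LinearMap.neg_apply]
        abel
      rw [hgoal, hK3_010 a b c, hK3_100 a b c] <;> simp
    · intro a b c
      rw [← sub_eq_zero]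
      have hgoal : (lhd c (succA a b + succA b a)) - (succA b (lhd c a) + succA a (lhd c b)) = (lhd c (succA a b) + lhd c (succA b a) - succA a (lhd c b) - succA b (lhd c a)) := by
        try simp only [map_add, map_sub, map_neg, LinearMap.add_apply, LinearMap.sub_apply, LinearMap.neg_apply]
        abel
      rw [hgoal, hK4_100 a b c] <;> simp
    · intro a b c
      rw [← sub_eq_zero]
      have hgoal : (lhd c (dia a b - dia b a) - dia a (lhd c b) - lhd (dia b c) a) - (- dia b (lhd c a) - lhd (dia a c) b) = -(lhd (dia b c) a + lhd c (dia b a) + dia a (lhd c b) - lhd (dia a c) b - lhd c (dia a b) - dia b (lhd c a)) := by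
        try simp only [map_add, map_sub, map_neg, LinearMap.add_apply, LinearMap.sub_apply, LinearMap.neg_apply]
        abel
      rw [hgoal, hK1_100 a b c] <;> simp
    · intro a b c
      rw [← sub_eq_zero]
      have hgoal : (rhd (dia a b - dia b a) c + dia (lhd a b + rhd a b) c) - (rhd a (dia b c) - dia b (rhd a c) + lhd (dia a c) b) = (lhd c (dia a b) + rhd (dia a b) c + dia (lhd a b) c + dia (rhd a b) c + dia b (lhd c a) + dia b (rhd a c) - lhd (dia b c) a - lhd c (dia b a) - rhd (dia b a) c - rhd a (dia b c) - dia a (lhd c b)) + (lhd (dia b c) a + lhd c (dia b a) + dia a (lhd c b) - lhd (dia a c) b - lhd c (dia a b) - dia b (lhd c a)) := by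
        try simp only [map_add, map_sub, map_neg, LinearMap.add_apply, LinearMap.sub_apply, LinearMap.neg_apply]
        abel
      rw [hgoal, hK1_001 b a c, hK1_100 a b c] <;> simp
    · intro a b c
      rw [← sub_eq_zero]
      have hgoal : (succA (dia a b - dia b a) c) - (dia a (succA b c) - succA b (dia a c)) = (succA (dia a b) c + succA b (dia a c) - succA (dia b a) c - dia a (succA b c)) := by
        try simp only [map_add, map_sub, map_neg, LinearMap.add_apply, LinearMap.sub_apply, LinearMap.neg_apply]
        abel
      rw [hgoal, hK3_000 a b c] <;> simp
    · intro a b c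
      rw [← sub_eq_zero]
      have hgoal : (dia (succA a b + succA b a) c) - (succA a (dia b c) + succA b (dia a c)) = (dia (succA a b) c + dia (succA b a) c - succA a (dia b c) - succA b (dia a c)) := by
        try simp only [map_add, map_sub, map_neg, LinearMap.add_apply, LinearMap.sub_apply, LinearMap.neg_apply]
        abel
      rw [hgoal, hK4_000 a b c] <;> simp
  · rintro ⟨⟨hN1, hN2, hN3, hN4⟩, hZ, hLS, hd1, hd2, hd3, hd4, hd5, hg1, hg2, hp1, hp2⟩
    have hzK1_000 : ∀ a b c : A, dia (dia b a) c + dia a (dia b c) - dia (dia a b) c - dia b (dia a c) = 0 := by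
      intro a b c
      have hgoal : (dia (dia b a) c + dia a (dia b c) - dia (dia a b) c - dia b (dia a c)) = -((dia (dia a b) c - dia a (dia b c)) - (dia (dia b a) c - dia b (dia a c))) := by
        try simp only [map_add, map_sub, map_neg, LinearMap.add_apply, LinearMap.sub_apply, LinearMap.neg_apply]
        abel
      rw [hgoal, hLS a b c] <;> simp
    have hzK1_001 : ∀ a b c : A, lhd c (dia b a) + rhd (dia b a) c + dia (lhd b a) c + dia (rhd b a) c + dia a (lhd c b) + dia a (rhd b c) - lhd (dia a c) b - lhd c (dia a b) - rhd (dia a b) c - rhd b (dia a c) - dia b (lhd c a) = 0 := by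
      intro a b c
      have hgoal : (lhd c (dia b a) + rhd (dia b a) c + dia (lhd b a) c + dia (rhd b a) c + dia a (lhd c b) + dia a (rhd b c) - lhd (dia a c) b - lhd c (dia a b) - rhd (dia a b) c - rhd b (dia a c) - dia b (lhd c a)) = ((rhd (dia b a - dia a b) c + dia (lhd b a + rhd b a) c) - (rhd b (dia a c) - dia a (rhd b c) + lhd (dia b c) a)) - ((lhd c (dia a b - dia b a) - dia a (lhd c b) - lhd (dia b c) a) - (- dia b (lhd c a) - lhd (dia a c) b)) := by
        try simp only [map_add, map_sub, map_neg, LinearMap.add_apply, LinearMap.sub_apply, LinearMap.neg_apply]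
        abel
      rw [hgoal, hg1 a b c, hg2 b a c] <;> simp
    have hzK1_002 : ∀ a b c : A, lhd c (lhd b a) + lhd c (rhd b a) + rhd (lhd b a) c + rhd (rhd b a) c - lhd (lhd c a) b - rhd b (lhd c a) = 0 := by
      intro a b c
      have hgoal : (lhd c (lhd b a) + lhd c (rhd b a) + rhd (lhd b a) c + rhd (rhd b a) c - lhd (lhd c a) b - rhd b (lhd c a)) = ((rhd (lhd b a + rhd b a) c) - (lhd (rhd b c) a)) - ((rhd b (lhd c a)) - (lhd (rhd b c) a + lhd c (lhd b a + rhd b a) - lhd (lhd c b) a)) - ((lhd (lhd c a) b) - (lhd (lhd c b) a)) := by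
        try simp only [map_add, map_sub, map_neg, LinearMap.add_apply, LinearMap.sub_apply, LinearMap.neg_apply]
        abel
      rw [hgoal, hN2 b c a, hN3 b a c, hN4 c a b] <;> simp
    have hzK1_010 : ∀ a b c : A, lhd (dia b c) a + lhd c (dia b a) + rhd (dia b a) c + rhd a (dia b c) + dia a (lhd c b) - lhd c (dia a b) - rhd (dia a b) c - dia (lhd a b) c - dia (rhd a b) c - dia b (lhd c a) - dia b (rhd a c) = 0 := by
      intro a b c
      have hgoal : (lhd (dia b c) a + lhd c (dia b a) + rhd (dia b a) c + rhd a (dia b c) + dia a (lhd c b) - lhd c (dia a b) - rhd (dia a b) c - dia (lhd a b) c - dia (rhd a b) c - dia b (lhd c a) - dia b (rhd a c)) = -((lhd c (dia a b - dia b a) - dia a (lhd c b) - lhd (dia b c) a) - (- dia b (lhd c a) - lhd (dia a c) b)) - ((rhd (dia a b - dia b a) c + dia (lhd a b + rhd a b) c) - (rhd a (dia b c) - dia b (rhd a c) + lhd (dia a c) b)) := by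
        try simp only [map_add, map_sub, map_neg, LinearMap.add_apply, LinearMap.sub_apply, LinearMap.neg_apply]
        abel
      rw [hgoal, hg1 a b c, hg2 a b c] <;> simp
    have hzK1_011 : ∀ a b c : A, lhd (lhd c b) a + lhd (rhd b c) a + lhd c (lhd b a) + lhd c (rhd b a) + rhd (lhd b a) c + rhd (rhd b a) c + rhd a (lhd c b) + rhd a (rhd b c) - lhd (lhd c a) b - lhd (rhd a c) b - lhd c (lhd a b) - lhd c (rhd a b) - rhd (lhd a b) c - rhd (rhd a b) c - rhd b (lhd c a) - rhd b (rhd a c) = 0 := by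
      intro a b c
      have hgoal : (lhd (lhd c b) a + lhd (rhd b c) a + lhd c (lhd b a) + lhd c (rhd b a) + rhd (lhd b a) c + rhd (rhd b a) c + rhd a (lhd c b) + rhd a (rhd b c) - lhd (lhd c a) b - lhd (rhd a c) b - lhd c (lhd a b) - lhd c (rhd a b) - rhd (lhd a b) c - rhd (rhd a b) c - rhd b (lhd c a) - rhd b (rhd a c)) = ((rhd a (rhd b c)) - (rhd (rhd a b + lhd a b) c + rhd b (rhd a c) - rhd (rhd b a + lhd b a) c)) + ((rhd a (lhd c b)) - (lhd (rhd a c) b + lhd c (lhd a b + rhd a b) - lhd (lhd c a) b)) - ((rhd b (lhd c a)) - (lhd (rhd b c) a + lhd c (lhd b a + rhd b a) - lhd (lhd c b) a)) - ((lhd (lhd c a) b) - (lhd (lhd c b) a)) - ((lhd (lhd c a) b) - (lhd (lhd c b) a)) := by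
        try simp only [map_add, map_sub, map_neg, LinearMap.add_apply, LinearMap.sub_apply, LinearMap.neg_apply]
        abel
      rw [hgoal, hN1 a b c, hN2 a c b, hN2 b c a, hN4 c a b] <;> simp
    have hzK1_020 : ∀ a b c : A, lhd (lhd c b) a + rhd a (lhd c b) - lhd c (lhd a b) - lhd c (rhd a b) - rhd (lhd a b) c - rhd (rhd a b) c = 0 := by
      intro a b c
      have hgoal : (lhd (lhd c b) a + rhd a (lhd c b) - lhd c (lhd a b) - lhd c (rhd a b) - rhd (lhd a b) c - rhd (rhd a b) c) = ((rhd a (lhd c b)) - (lhd (rhd a c) b + lhd c (lhd a b + rhd a b) - lhd (lhd c a) b)) - ((rhd (lhd a b + rhd a b) c) - (lhd (rhd a c) b)) - ((lhd (lhd c a) b) - (lhd (lhd c b) a)) := by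
        try simp only [map_add, map_sub, map_neg, LinearMap.add_apply, LinearMap.sub_apply, LinearMap.neg_apply]
        abel
      rw [hgoal, hN2 a c b, hN3 a b c, hN4 c a b] <;> simp
    have hzK1_100 : ∀ a b c : A, lhd (dia b c) a + lhd c (dia b a) + dia a (lhd c b) - lhd (dia a c) b - lhd c (dia a b) - dia b (lhd c a) = 0 := by
      intro a b c
      have hgoal : (lhd (dia b c) a + lhd c (dia b a) + dia a (lhd c b) - lhd (dia a c) b - lhd c (dia a b) - dia b (lhd c a)) = -((lhd c (dia a b - dia b a) - dia a (lhd c b) - lhd (dia b c) a) - (- dia b (lhd c a) - lhd (dia a c) b)) := by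
        try simp only [map_add, map_sub, map_neg, LinearMap.add_apply, LinearMap.sub_apply, LinearMap.neg_apply]
        abel
      rw [hgoal, hg1 a b c] <;> simp
    have hzK1_101 : ∀ a b c : A, lhd (lhd c b) a + lhd (rhd b c) a + lhd c (lhd b a) + lhd c (rhd b a) - lhd (lhd c a) b - lhd (lhd c a) b - rhd b (lhd c a) = 0 := by
      intro a b c
      have hgoal : (lhd (lhd c b) a + lhd (rhd b c) a + lhd c (lhd b a) + lhd c (rhd b a) - lhd (lhd c a) b - lhd (lhd c a) b - rhd b (lhd c a)) = -((rhd b (lhd c a)) - (lhd (rhd b c) a + lhd c (lhd b a + rhd b a) - lhd (lhd c b) a)) - ((lhd (lhd c a) b) - (lhd (lhd c b) a)) - ((lhd (lhd c a) b) - (lhd (lhd c b) a)) := by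
        try simp only [map_add, map_sub, map_neg, LinearMap.add_apply, LinearMap.sub_apply, LinearMap.neg_apply]
        abel
      rw [hgoal, hN2 b c a, hN4 c a b] <;> simp
    have hzK1_110 : ∀ a b c : A, lhd (lhd c b) a + lhd (lhd c b) a + rhd a (lhd c b) - lhd (lhd c a) b - lhd (rhd a c) b - lhd c (lhd a b) - lhd c (rhd a b) = 0 := by
      intro a b c
      have hgoal : (lhd (lhd c b) a + lhd (lhd c b) a + rhd a (lhd c b) - lhd (lhd c a) b - lhd (rhd a c) b - lhd c (lhd a b) - lhd c (rhd a b)) = ((rhd a (lhd c b)) - (lhd (rhd a c) b + lhd c (lhd a b + rhd a b) - lhd (lhd c a) b)) - ((lhd (lhd c a) b) - (lhd (lhd c b) a)) - ((lhd (lhd c a) b) - (lhd (lhd c b) a)) := by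
        try simp only [map_add, map_sub, map_neg, LinearMap.add_apply, LinearMap.sub_apply, LinearMap.neg_apply]
        abel
      rw [hgoal, hN2 a c b, hN4 c a b] <;> simp
    have hzK1_200 : ∀ a b c : A, lhd (lhd c b) a - lhd (lhd c a) b = 0 := by
      intro a b c
      have hgoal : (lhd (lhd c b) a - lhd (lhd c a) b) = -((lhd (lhd c a) b) - (lhd (lhd c b) a)) := by
        try simp only [map_add, map_sub, map_neg, LinearMap.add_apply, LinearMap.sub_apply, LinearMap.neg_apply]
        abel
      rw [hgoal, hN4 c a b] <;> simp
    have hzK2_000 : ∀ a b c : A, succA a (succA b c) - succA (succA a b) c - succA (succA b a) c = 0 := by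
      intro a b c
      have hgoal : (succA a (succA b c) - succA (succA a b) c - succA (succA b a) c) = ((succA a (succA b c)) - (succA (succA b a + succA a b) c)) := by
        try simp only [map_add, map_sub, map_neg, LinearMap.add_apply, LinearMap.sub_apply, LinearMap.neg_apply]
        abel
      rw [hgoal, hZ a b c] <;> simp
    have hzK3_000 : ∀ a b c : A, succA (dia a b) c + succA b (dia a c) - succA (dia b a) c - dia a (succA b c) = 0 := by
      intro a b c
      have hgoal : (succA (dia a b) c + succA b (dia a c) - succA (dia b a) c - dia a (succA b c)) = ((succA (dia a b - dia b a) c) - (dia a (succA b c) - succA b (dia a c))) := by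
        try simp only [map_add, map_sub, map_neg, LinearMap.add_apply, LinearMap.sub_apply, LinearMap.neg_apply]
        abel
      rw [hgoal, hp1 a b c] <;> simp
    have hzK3_001 : ∀ a b c : A, succA b (lhd c a) - succA (lhd b a) c - succA (rhd b a) c = 0 := by
      intro a b c
      have hgoal : (succA b (lhd c a) - succA (lhd b a) c - succA (rhd b a) c) = ((succA b (lhd c a)) - (succA (lhd b a + rhd b a) c)) := by
        try simp only [map_add, map_sub, map_neg, LinearMap.add_apply, LinearMap.sub_apply, LinearMap.neg_apply]
        abel
      rw [hgoal, hd3 b a c] <;> simp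
    have hzK3_010 : ∀ a b c : A, succA (lhd a b) c + succA (rhd a b) c + succA b (lhd c a) + succA b (rhd a c) - lhd (succA b c) a - rhd a (succA b c) = 0 := by
      intro a b c
      have hgoal : (succA (lhd a b) c + succA (rhd a b) c + succA b (lhd c a) + succA b (rhd a c) - lhd (succA b c) a - rhd a (succA b c)) = -((lhd (succA b c) a) - (succA b (lhd c a))) - ((rhd a (succA b c)) - (succA (lhd a b + rhd a b) c + succA b (rhd a c))) := by
        try simp only [map_add, map_sub, map_neg, LinearMap.add_apply, LinearMap.sub_apply, LinearMap.neg_apply]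
        abel
      rw [hgoal, hd2 b a c, hd4 a b c] <;> simp
    have hzK3_100 : ∀ a b c : A, succA b (lhd c a) - lhd (succA b c) a = 0 := by
      intro a b c
      have hgoal : (succA b (lhd c a) - lhd (succA b c) a) = -((lhd (succA b c) a) - (succA b (lhd c a))) := by
        try simp only [map_add, map_sub, map_neg, LinearMap.add_apply, LinearMap.sub_apply, LinearMap.neg_apply]
        abel
      rw [hgoal, hd2 b a c] <;> simp
    have hzK4_000 : ∀ a b c : A, dia (succA a b) c + dia (succA b a) c - succA a (dia b c) - succA b (dia a c) = 0 := by
      intro a b c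
      have hgoal : (dia (succA a b) c + dia (succA b a) c - succA a (dia b c) - succA b (dia a c)) = ((dia (succA a b + succA b a) c) - (succA a (dia b c) + succA b (dia a c))) := by
        try simp only [map_add, map_sub, map_neg, LinearMap.add_apply, LinearMap.sub_apply, LinearMap.neg_apply]
        abel
      rw [hgoal, hp2 a b c] <;> simp
    have hzK4_001 : ∀ a b c : A, lhd c (succA a b) + lhd c (succA b a) + rhd (succA a b) c + rhd (succA b a) c - succA a (lhd c b) - succA a (rhd b c) - succA b (lhd c a) = 0 := by
      intro a b c
      have hgoal : (lhd c (succA a b) + lhd c (succA b a) + rhd (succA a b) c + rhd (succA b a) c - succA a (lhd c b) - succA a (rhd b c) - succA b (lhd c a)) = ((rhd (succA a b + succA b a) c) - (succA a (rhd b c))) + ((lhd c (succA a b + succA b a)) - (succA b (lhd c a) + succA a (lhd c b))) := by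
        try simp only [map_add, map_sub, map_neg, LinearMap.add_apply, LinearMap.sub_apply, LinearMap.neg_apply]
        abel
      rw [hgoal, hd1 a b c, hd5 a b c] <;> simp
    have hzK4_010 : ∀ a b c : A, lhd c (succA a b) + lhd c (succA b a) + rhd (succA a b) c + rhd (succA b a) c - succA a (lhd c b) - succA b (lhd c a) - succA b (rhd a c) = 0 := by
      intro a b c
      have hgoal : (lhd c (succA a b) + lhd c (succA b a) + rhd (succA a b) c + rhd (succA b a) c - succA a (lhd c b) - succA b (lhd c a) - succA b (rhd a c)) = ((rhd (succA b a + succA a b) c) - (succA b (rhd a c))) + ((lhd c (succA a b + succA b a)) - (succA b (lhd c a) + succA a (lhd c b))) := by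
        try simp only [map_add, map_sub, map_neg, LinearMap.add_apply, LinearMap.sub_apply, LinearMap.neg_apply]
        abel
      rw [hgoal, hd1 b a c, hd5 a b c] <;> simp
    have hzK4_100 : ∀ a b c : A, lhd c (succA a b) + lhd c (succA b a) - succA a (lhd c b) - succA b (lhd c a) = 0 := by
      intro a b c
      have hgoal : (lhd c (succA a b) + lhd c (succA b a) - succA a (lhd c b) - succA b (lhd c a)) = ((lhd c (succA a b + succA b a)) - (succA b (lhd c a) + succA a (lhd c b))) := by
        try simp only [map_add, map_sub, map_neg, LinearMap.add_apply, LinearMap.sub_apply, LinearMap.neg_apply]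
        abel
      rw [hgoal, hd5 a b c] <;> simp
    refine ⟨⟨hcircBil, hcircFs, hcircSesq, ?_⟩, ⟨hsuccBil, hsuccFs, hsuccSesq, ?_⟩, ?_, ?_⟩
    · intro lam mu x y z
      have hred := Stmt14Aux.red (k := k) (fun x y z => (cev circ (sc lam) (x) (cev circ (sc mu) (y) (z)) - cev circ (sc (lam + mu)) (cev circ (sc lam) (x) (y)) (z)) - (cev circ (sc mu) (y) (cev circ (sc lam) (x) (z)) - cev circ (sc (lam + mu)) (cev circ (sc mu) (y) (x)) (z))) (-lam) (-mu) (lam + mu)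
        (by intro x x' y z; simp only [eCg, eSg, eCal, eCar, eCsl, eCsr, eCnl, eCnr, eCbl, eCbr, eSal, eSar, eSsl, eSsr, eSnl, eSnr, eSbl, eSbr, eCdl, eCdr, eCdl', eCdr', eSdl, eSdr, eSdl', eSdr', Stmt14Aux.sc_apply, LinearMap.sub_apply, LinearMap.neg_apply, LinearMap.add_apply, map_add, map_sub, map_neg, map_smul, smul_add, smul_sub, smul_neg]; module)
        (by intro x y y' z; simp only [eCg, eSg, eCal, eCar, eCsl, eCsr, eCnl, eCnr, eCbl, eCbr, eSal, eSar, eSsl, eSsr, eSnl, eSnr, eSbl, eSbr, eCdl, eCdr, eCdl', eCdr', eSdl, eSdr, eSdl', eSdr', Stmt14Aux.sc_apply, LinearMap.sub_apply, LinearMap.neg_apply, LinearMap.add_apply, map_add, map_sub, map_neg, map_smul, smul_add, smul_sub, smul_neg]; module)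
        (by intro x y z z'; simp only [eCg, eSg, eCal, eCar, eCsl, eCsr, eCnl, eCnr, eCbl, eCbr, eSal, eSar, eSsl, eSsr, eSnl, eSnr, eSbl, eSbr, eCdl, eCdr, eCdl', eCdr', eSdl, eSdr, eSdl', eSdr', Stmt14Aux.sc_apply, LinearMap.sub_apply, LinearMap.neg_apply, LinearMap.add_apply, map_add, map_sub, map_neg, map_smul, smul_add, smul_sub, smul_neg]; module)
        (by intro x y z; simp only [eCg, eSg, eCal, eCar, eCsl, eCsr, eCnl, eCnr, eCbl, eCbr, eSal, eSar, eSsl, eSsr, eSnl, eSnr, eSbl, eSbr, eCdl, eCdr, eCdl', eCdr', eSdl, eSdr, eSdl', eSdr', Stmt14Aux.sc_apply, LinearMap.sub_apply, LinearMap.neg_apply, LinearMap.add_apply, map_add, map_sub, map_neg, map_smul, smul_add, smul_sub, smul_neg]; module)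
        (by intro x y z; simp only [eCg, eSg, eCal, eCar, eCsl, eCsr, eCnl, eCnr, eCbl, eCbr, eSal, eSar, eSsl, eSsr, eSnl, eSnr, eSbl, eSbr, eCdl, eCdr, eCdl', eCdr', eSdl, eSdr, eSdl', eSdr', Stmt14Aux.sc_apply, LinearMap.sub_apply, LinearMap.neg_apply, LinearMap.add_apply, map_add, map_sub, map_neg, map_smul, smul_add, smul_sub, smul_neg]; module)
        (by intro x y z; simp only [eCg, eSg, eCal, eCar, eCsl, eCsr, eCnl, eCnr, eCbl, eCbr, eSal, eSar, eSsl, eSsr, eSnl, eSnr, eSbl, eSbr, eCdl, eCdr, eCdl', eCdr', eSdl, eSdr, eSdl', eSdr', Stmt14Aux.sc_apply, LinearMap.sub_apply, LinearMap.neg_apply, LinearMap.add_apply, map_add, map_sub, map_neg, map_smul, smul_add, smul_sub, smul_neg]; module)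
        (by intro a b c; show (cev circ (sc lam) (emb k A (a)) (cev circ (sc mu) (emb k A (b)) (emb k A (c))) - cev circ (sc (lam + mu)) (cev circ (sc lam) (emb k A (a)) (emb k A (b))) (emb k A (c))) - (cev circ (sc mu) (emb k A (b)) (cev circ (sc lam) (emb k A (a)) (emb k A (c))) - cev circ (sc (lam + mu)) (cev circ (sc mu) (emb k A (b)) (emb k A (a))) (emb k A (c))) = 0; rw [hexp1 lam mu a b c, hzK1_000 a b c, hzK1_001 a b c, hzK1_002 a b c, hzK1_010 a b c, hzK1_011 a b c, hzK1_020 a b c, hzK1_100 a b c, hzK1_101 a b c, hzK1_110 a b c, hzK1_200 a b c] <;> simp)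
      exact sub_eq_zero.mp (hred x y z)
    · intro lam mu x y z
      have hred := Stmt14Aux.red (k := k) (fun x y z => cev succ (sc lam) (x) (cev succ (sc mu) (y) (z)) - cev succ (sc (lam + mu)) (cev succ (sc lam) (x) (y) + cev succ (-sc lam - shft k A) (y) (x)) (z)) (-lam) (-mu) (lam + mu)
        (by intro x x' y z; simp only [eCg, eSg, eCal, eCar, eCsl, eCsr, eCnl, eCnr, eCbl, eCbr, eSal, eSar, eSsl, eSsr, eSnl, eSnr, eSbl, eSbr, eCdl, eCdr, eCdl', eCdr', eSdl, eSdr, eSdl', eSdr', Stmt14Aux.sc_apply, LinearMap.sub_apply, LinearMap.neg_apply, LinearMap.add_apply, map_add, map_sub, map_neg, map_smul, smul_add, smul_sub, smul_neg]; module)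
        (by intro x y y' z; simp only [eCg, eSg, eCal, eCar, eCsl, eCsr, eCnl, eCnr, eCbl, eCbr, eSal, eSar, eSsl, eSsr, eSnl, eSnr, eSbl, eSbr, eCdl, eCdr, eCdl', eCdr', eSdl, eSdr, eSdl', eSdr', Stmt14Aux.sc_apply, LinearMap.sub_apply, LinearMap.neg_apply, LinearMap.add_apply, map_add, map_sub, map_neg, map_smul, smul_add, smul_sub, smul_neg]; module)
        (by intro x y z z'; simp only [eCg, eSg, eCal, eCar, eCsl, eCsr, eCnl, eCnr, eCbl, eCbr, eSal, eSar, eSsl, eSsr, eSnl, eSnr, eSbl, eSbr, eCdl, eCdr, eCdl', eCdr', eSdl, eSdr, eSdl', eSdr', Stmt14Aux.sc_apply, LinearMap.sub_apply, LinearMap.neg_apply, LinearMap.add_apply, map_add, map_sub, map_neg, map_smul, smul_add, smul_sub, smul_neg]; module)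
        (by intro x y z; simp only [eCg, eSg, eCal, eCar, eCsl, eCsr, eCnl, eCnr, eCbl, eCbr, eSal, eSar, eSsl, eSsr, eSnl, eSnr, eSbl, eSbr, eCdl, eCdr, eCdl', eCdr', eSdl, eSdr, eSdl', eSdr', Stmt14Aux.sc_apply, LinearMap.sub_apply, LinearMap.neg_apply, LinearMap.add_apply, map_add, map_sub, map_neg, map_smul, smul_add, smul_sub, smul_neg]; module)
        (by intro x y z; simp only [eCg, eSg, eCal, eCar, eCsl, eCsr, eCnl, eCnr, eCbl, eCbr, eSal, eSar, eSsl, eSsr, eSnl, eSnr, eSbl, eSbr, eCdl, eCdr, eCdl', eCdr', eSdl, eSdr, eSdl', eSdr', Stmt14Aux.sc_apply, LinearMap.sub_apply, LinearMap.neg_apply, LinearMap.add_apply, map_add, map_sub, map_neg, map_smul, smul_add, smul_sub, smul_neg]; module)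
        (by intro x y z; simp only [eCg, eSg, eCal, eCar, eCsl, eCsr, eCnl, eCnr, eCbl, eCbr, eSal, eSar, eSsl, eSsr, eSnl, eSnr, eSbl, eSbr, eCdl, eCdr, eCdl', eCdr', eSdl, eSdr, eSdl', eSdr', Stmt14Aux.sc_apply, LinearMap.sub_apply, LinearMap.neg_apply, LinearMap.add_apply, map_add, map_sub, map_neg, map_smul, smul_add, smul_sub, smul_neg]; module)
        (by intro a b c; show cev succ (sc lam) (emb k A (a)) (cev succ (sc mu) (emb k A (b)) (emb k A (c))) - cev succ (sc (lam + mu)) (cev succ (sc lam) (emb k A (a)) (emb k A (b)) + cev succ (-sc lam - shft k A) (emb k A (b)) (emb k A (a))) (emb k A (c)) = 0; rw [hexp2 lam mu a b c, hzK2_000 a b c] <;> simp)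
      exact sub_eq_zero.mp (hred x y z)
    · intro lam mu x y z
      have hred := Stmt14Aux.red (k := k) (fun x y z => cev succ (sc (lam + mu)) (cev circ (sc lam) (x) (y) - cev circ (-sc lam - shft k A) (y) (x)) (z) - (cev circ (sc lam) (x) (cev succ (sc mu) (y) (z)) - cev succ (sc mu) (y) (cev circ (sc lam) (x) (z)))) (-lam) (-mu) (lam + mu)
        (by intro x x' y z; simp only [eCg, eSg, eCal, eCar, eCsl, eCsr, eCnl, eCnr, eCbl, eCbr, eSal, eSar, eSsl, eSsr, eSnl, eSnr, eSbl, eSbr, eCdl, eCdr, eCdl', eCdr', eSdl, eSdr, eSdl', eSdr', Stmt14Aux.sc_apply, LinearMap.sub_apply, LinearMap.neg_apply, LinearMap.add_apply, map_add, map_sub, map_neg, map_smul, smul_add, smul_sub, smul_neg]; module)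
        (by intro x y y' z; simp only [eCg, eSg, eCal, eCar, eCsl, eCsr, eCnl, eCnr, eCbl, eCbr, eSal, eSar, eSsl, eSsr, eSnl, eSnr, eSbl, eSbr, eCdl, eCdr, eCdl', eCdr', eSdl, eSdr, eSdl', eSdr', Stmt14Aux.sc_apply, LinearMap.sub_apply, LinearMap.neg_apply, LinearMap.add_apply, map_add, map_sub, map_neg, map_smul, smul_add, smul_sub, smul_neg]; module)
        (by intro x y z z'; simp only [eCg, eSg, eCal, eCar, eCsl, eCsr, eCnl, eCnr, eCbl, eCbr, eSal, eSar, eSsl, eSsr, eSnl, eSnr, eSbl, eSbr, eCdl, eCdr, eCdl', eCdr', eSdl, eSdr, eSdl', eSdr', Stmt14Aux.sc_apply, LinearMap.sub_apply, LinearMap.neg_apply, LinearMap.add_apply, map_add, map_sub, map_neg, map_smul, smul_add, smul_sub, smul_neg]; module)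
        (by intro x y z; simp only [eCg, eSg, eCal, eCar, eCsl, eCsr, eCnl, eCnr, eCbl, eCbr, eSal, eSar, eSsl, eSsr, eSnl, eSnr, eSbl, eSbr, eCdl, eCdr, eCdl', eCdr', eSdl, eSdr, eSdl', eSdr', Stmt14Aux.sc_apply, LinearMap.sub_apply, LinearMap.neg_apply, LinearMap.add_apply, map_add, map_sub, map_neg, map_smul, smul_add, smul_sub, smul_neg]; module)
        (by intro x y z; simp only [eCg, eSg, eCal, eCar, eCsl, eCsr, eCnl, eCnr, eCbl, eCbr, eSal, eSar, eSsl, eSsr, eSnl, eSnr, eSbl, eSbr, eCdl, eCdr, eCdl', eCdr', eSdl, eSdr, eSdl', eSdr', Stmt14Aux.sc_apply, LinearMap.sub_apply, LinearMap.neg_apply, LinearMap.add_apply, map_add, map_sub, map_neg, map_smul, smul_add, smul_sub, smul_neg]; module)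
        (by intro x y z; simp only [eCg, eSg, eCal, eCar, eCsl, eCsr, eCnl, eCnr, eCbl, eCbr, eSal, eSar, eSsl, eSsr, eSnl, eSnr, eSbl, eSbr, eCdl, eCdr, eCdl', eCdr', eSdl, eSdr, eSdl', eSdr', Stmt14Aux.sc_apply, LinearMap.sub_apply, LinearMap.neg_apply, LinearMap.add_apply, map_add, map_sub, map_neg, map_smul, smul_add, smul_sub, smul_neg]; module)
        (by intro a b c; show cev succ (sc (lam + mu)) (cev circ (sc lam) (emb k A (a)) (emb k A (b)) - cev circ (-sc lam - shft k A) (emb k A (b)) (emb k A (a))) (emb k A (c)) - (cev circ (sc lam) (emb k A (a)) (cev succ (sc mu) (emb k A (b)) (emb k A (c))) - cev succ (sc mu) (emb k A (b)) (cev circ (sc lam) (emb k A (a)) (emb k A (c)))) = 0; rw [hexp3 lam mu a b c, hzK3_000 a b c, hzK3_001 a b c, hzK3_010 a b c, hzK3_100 a b c] <;> simp)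
      exact sub_eq_zero.mp (hred x y z)
    · intro lam mu x y z
      have hred := Stmt14Aux.red (k := k) (fun x y z => cev circ (sc (lam + mu)) (cev succ (sc lam) (x) (y) + cev succ (-sc lam - shft k A) (y) (x)) (z) - (cev succ (sc lam) (x) (cev circ (sc mu) (y) (z)) + cev succ (sc mu) (y) (cev circ (sc lam) (x) (z)))) (-lam) (-mu) (lam + mu)
        (by intro x x' y z; simp only [eCg, eSg, eCal, eCar, eCsl, eCsr, eCnl, eCnr, eCbl, eCbr, eSal, eSar, eSsl, eSsr, eSnl, eSnr, eSbl, eSbr, eCdl, eCdr, eCdl', eCdr', eSdl, eSdr, eSdl', eSdr', Stmt14Aux.sc_apply, LinearMap.sub_apply, LinearMap.neg_apply, LinearMap.add_apply, map_add, map_sub, map_neg, map_smul, smul_add, smul_sub, smul_neg]; module)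
        (by intro x y y' z; simp only [eCg, eSg, eCal, eCar, eCsl, eCsr, eCnl, eCnr, eCbl, eCbr, eSal, eSar, eSsl, eSsr, eSnl, eSnr, eSbl, eSbr, eCdl, eCdr, eCdl', eCdr', eSdl, eSdr, eSdl', eSdr', Stmt14Aux.sc_apply, LinearMap.sub_apply, LinearMap.neg_apply, LinearMap.add_apply, map_add, map_sub, map_neg, map_smul, smul_add, smul_sub, smul_neg]; module)
        (by intro x y z z'; simp only [eCg, eSg, eCal, eCar, eCsl, eCsr, eCnl, eCnr, eCbl, eCbr, eSal, eSar, eSsl, eSsr, eSnl, eSnr, eSbl, eSbr, eCdl, eCdr, eCdl', eCdr', eSdl, eSdr, eSdl', eSdr', Stmt14Aux.sc_apply, LinearMap.sub_apply, LinearMap.neg_apply, LinearMap.add_apply, map_add, map_sub, map_neg, map_smul, smul_add, smul_sub, smul_neg]; module)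
        (by intro x y z; simp only [eCg, eSg, eCal, eCar, eCsl, eCsr, eCnl, eCnr, eCbl, eCbr, eSal, eSar, eSsl, eSsr, eSnl, eSnr, eSbl, eSbr, eCdl, eCdr, eCdl', eCdr', eSdl, eSdr, eSdl', eSdr', Stmt14Aux.sc_apply, LinearMap.sub_apply, LinearMap.neg_apply, LinearMap.add_apply, map_add, map_sub, map_neg, map_smul, smul_add, smul_sub, smul_neg]; module)
        (by intro x y z; simp only [eCg, eSg, eCal, eCar, eCsl, eCsr, eCnl, eCnr, eCbl, eCbr, eSal, eSar, eSsl, eSsr, eSnl, eSnr, eSbl, eSbr, eCdl, eCdr, eCdl', eCdr', eSdl, eSdr, eSdl', eSdr', Stmt14Aux.sc_apply, LinearMap.sub_apply, LinearMap.neg_apply, LinearMap.add_apply, map_add, map_sub, map_neg, map_smul, smul_add, smul_sub, smul_neg]; module)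
        (by intro x y z; simp only [eCg, eSg, eCal, eCar, eCsl, eCsr, eCnl, eCnr, eCbl, eCbr, eSal, eSar, eSsl, eSsr, eSnl, eSnr, eSbl, eSbr, eCdl, eCdr, eCdl', eCdr', eSdl, eSdr, eSdl', eSdr', Stmt14Aux.sc_apply, LinearMap.sub_apply, LinearMap.neg_apply, LinearMap.add_apply, map_add, map_sub, map_neg, map_smul, smul_add, smul_sub, smul_neg]; module)
        (by intro a b c; show cev circ (sc (lam + mu)) (cev succ (sc lam) (emb k A (a)) (emb k A (b)) + cev succ (-sc lam - shft k A) (emb k A (b)) (emb k A (a))) (emb k A (c)) - (cev succ (sc lam) (emb k A (a)) (cev circ (sc mu) (emb k A (b)) (emb k A (c))) + cev succ (sc mu) (emb k A (b)) (cev circ (sc lam) (emb k A (a)) (emb k A (c)))) = 0; rw [hexp4 lam mu a b c, hzK4_000 a b c, hzK4_001 a b c, hzK4_010 a b c, hzK4_100 a b c] <;> simp)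
      exact sub_eq_zero.mp (hred x y z)
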